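/- arXiv:1905.09999 — 6 statements merged into one kernel-verified Lean document; each statement's English description precedes it below -/
import Mathlib

section
/- There exists a constant C = C(n,s) > 0 with the following property (narrow region principle). Let D ⊂ ℝ^n be a bounded open set, let c : D → ℝ be bounded from below, and let w ∈ L_{2s} ∩ C^{1,1}_loc(D) be lower semicontinuous on the closure of D and satisfy (-Δ)^s w(x) + c(x) w(x) ≥ 0 for all x ∈ D and w(x) ≥ 0 for all x ∈ ℝ^n \ D. If d_n(D) · |inf_D c|^{1/(2s)} ≤ C, where d_n(D) = sup{|x_n − y_n| : x, y ∈ D} is the width of D in the x_n-direction, then w(x) ≥ 0 for all x ∈ D. -/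
open MeasureTheory Filter Metric Set

noncomputable section

/-- Points of ℝⁿ with the Euclidean norm. -/
abbrev Pt (n : ℕ) := EuclideanSpace ℝ (Fin n)

/-- The space `L_{2s}`: locally integrable functions `u` with
`∫ |u(x)|/(1+|x|^{n+2s}) dx < ∞`. -/
def MemL2s (n : ℕ) (s : ℝ) (u : Pt n → ℝ) : Prop :=
  LocallyIntegrable u volume ∧
    Integrable (fun x : Pt n => |u x| / (1 + ‖x‖ ^ ((n : ℝ) + 2 * s))) volume

/-- `u` is locally `C^{1,1}` on the open set `D`. -/
def C11loc (n : ℕ) (u : Pt n → ℝ) (D : Set (Pt n)) : Prop :=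
  ∀ x ∈ D, ∃ ε > 0, ball x ε ⊆ D ∧ DifferentiableOn ℝ u (ball x ε) ∧
    ∃ K : NNReal, LipschitzOnWith K (fun y => fderivWithin ℝ u (ball x ε) y) (ball x ε)

/-- `(-Δ)^s u (x) = L`, with the principal value defined as the limit, as `ε → 0⁺`, of
`C_{n,s} ∫_{ℝⁿ \ B_ε(x)} (u(x) - u(y))/|x-y|^{n+2s} dy`. -/
def HasFracLap (n : ℕ) (s Cns : ℝ) (u : Pt n → ℝ) (x : Pt n) (L : ℝ) : Prop :=
  Tendsto (fun ε : ℝ =>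
      Cns * ∫ y in {y : Pt n | ε ≤ dist x y}, (u x - u y) / dist x y ^ ((n : ℝ) + 2 * s))
    (nhdsWithin 0 (Set.Ioi 0)) (nhds L)

/-- The index of the last coordinate (`x_n`). -/
def lastIdx (n : ℕ) (hn : 0 < n) : Fin n := ⟨n - 1, Nat.sub_lt hn Nat.one_pos⟩

/-- The unit vector `e_n` in the `x_n` direction. -/
def eN (n : ℕ) (hn : 0 < n) : Pt n := EuclideanSpace.single (lastIdx n hn) 1

/-- The width of `D` in the `x_n` direction. -/
def widthN (n : ℕ) (hn : 0 < n) (D : Set (Pt n)) : ℝ :=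
  sSup {d : ℝ | ∃ x ∈ D, ∃ y ∈ D, d = |x (lastIdx n hn) - y (lastIdx n hn)|}

lemma abs_apply_le_norm {n : ℕ} (x : Pt n) (i : Fin n) : |x i| ≤ ‖x‖ := by
  rw [EuclideanSpace.norm_eq]
  have h1 : ‖x i‖ ^ 2 ≤ ∑ j, ‖x j‖ ^ 2 :=
    Finset.single_le_sum (f := fun j => ‖x j‖ ^ 2) (fun j _ => by positivity) (Finset.mem_univ i)
  calc |x i| = Real.sqrt (‖x i‖ ^ 2) := by
        rw [Real.sqrt_sq_eq_abs, Real.norm_eq_abs, abs_abs]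
    _ ≤ _ := Real.sqrt_le_sqrt h1

lemma lsc_exists_min {X : Type*} [TopologicalSpace X] {K : Set X} (hK : IsCompact K)
    (hne : K.Nonempty) {f : X → ℝ} (hf : LowerSemicontinuousOn f K) :
    ∃ x ∈ K, ∀ y ∈ K, f x ≤ f y := by
  by_contra h
  push_neg at h
  choose! g hg1 hg2 using h
  have hU : ∀ x ∈ K, ∃ V : Set X, IsOpen V ∧ x ∈ V ∧ ∀ z ∈ V ∩ K, f (g x) < f z := by
    intro x hx
    have hev : {z | f (g x) < f z} ∈ nhdsWithin x K := hf x hx (f (g x)) (hg2 x hx)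
    rw [mem_nhdsWithin] at hev
    obtain ⟨u, huo, hxu, hsub⟩ := hev
    exact ⟨u, huo, hxu, fun z hz => hsub hz⟩
  choose! V hVopen hVmem hVlt using hU
  obtain ⟨t, htK, hcov⟩ := hK.elim_nhds_subcover V
    (fun x hx => (hVopen x hx).mem_nhds (hVmem x hx))
  have htne : t.Nonempty := by
    obtain ⟨x0, hx0⟩ := hne
    obtain ⟨i, hi, _⟩ := mem_iUnion₂.1 (hcov hx0)
    exact ⟨i, hi⟩
  obtain ⟨j, hjt, hjmin⟩ := t.exists_min_image (fun i => f (g i)) htne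
  have hgjK : g j ∈ K := hg1 j (htK j hjt)
  obtain ⟨i, hit, hgi⟩ := mem_iUnion₂.1 (hcov hgjK)
  have h1 : f (g i) < f (g j) := hVlt i (htK i hit) (g j) ⟨hgi, hgjK⟩
  exact absurd (hjmin i hit) (not_le.2 h1)

lemma norm_le_of_dist {n : ℕ} (x₀ y : Pt n) : ‖y‖ ≤ ‖x₀‖ + dist x₀ y := by
  rw [dist_eq_norm]
  have h := abs_norm_sub_norm_le x₀ y
  rw [abs_le] at h
  linarith [h.1]

lemma integrableOn_kernel {n : ℕ} {s : ℝ} (hs0 : 0 < s) (w : Pt n → ℝ)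
    (hw : MemL2s n s w) (x₀ : Pt n) {ε : ℝ} (hε : 0 < ε) :
    IntegrableOn (fun y => (w x₀ - w y) / dist x₀ y ^ ((n : ℝ) + 2 * s))
      {y : Pt n | ε ≤ dist x₀ y} volume := by
  set p : ℝ := (n : ℝ) + 2 * s with hp_def
  have hp_pos : 0 < p := by positivity
  have hnp : (Module.finrank ℝ (Pt n) : ℝ) < p := by
    rw [finrank_euclideanSpace_fin]
    simp only [hp_def]
    linarith
  have hmeas_set : MeasurableSet {y : Pt n | ε ≤ dist x₀ y} :=
    (isClosed_le continuous_const (continuous_const.dist continuous_id)).measurableSet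
  have hcontA : Continuous fun y : Pt n => dist x₀ y ^ p :=
    (continuous_const.dist continuous_id).rpow_const (fun y => Or.inr hp_pos.le)
  have hwm : AEStronglyMeasurable w volume := hw.1.aestronglyMeasurable
  -- piece A
  have hA : IntegrableOn (fun y : Pt n => w x₀ / dist x₀ y ^ p)
      {y : Pt n | ε ≤ dist x₀ y} volume := by
    set c1 : ℝ := (1 + ‖x₀‖ + ε) / ε with hc1_def
    have hc1_pos : 0 < c1 := by positivity
    refine Integrable.mono'
      (g := fun y : Pt n => (|w x₀| * c1 ^ p) * (1 + ‖y‖) ^ (-p)) ?_ ?_ ?_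
    · exact ((integrable_one_add_norm hnp).const_mul _).restrict
    · exact ((measurable_const.div hcontA.measurable).aestronglyMeasurable).restrict
    · rw [ae_restrict_iff' hmeas_set]
      refine ae_of_all _ fun y hy => ?_
      have hy' : ε ≤ dist x₀ y := hy
      have hdpos : 0 < dist x₀ y := lt_of_lt_of_le hε hy'
      have hApos : 0 < dist x₀ y ^ p := Real.rpow_pos_of_pos hdpos p
      have hBpos : 0 < (1 + ‖y‖) ^ p := Real.rpow_pos_of_pos (by positivity) p
      have hkey : (1 + ‖y‖) ^ p ≤ c1 ^ p * dist x₀ y ^ p := by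
        rw [← Real.mul_rpow hc1_pos.le dist_nonneg]
        refine Real.rpow_le_rpow (by positivity) ?_ hp_pos.le
        have hyn : ‖y‖ ≤ ‖x₀‖ + dist x₀ y := norm_le_of_dist x₀ y
        rw [hc1_def, div_mul_eq_mul_div, le_div_iff₀ hε]
        nlinarith [norm_nonneg x₀]
      have hmain : |w x₀| / dist x₀ y ^ p ≤ |w x₀| * c1 ^ p / (1 + ‖y‖) ^ p := by
        rw [div_le_div_iff₀ hApos hBpos]
        nlinarith [mul_le_mul_of_nonneg_left hkey (abs_nonneg (w x₀))]
      calc ‖w x₀ / dist x₀ y ^ p‖ = |w x₀| / dist x₀ y ^ p := by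
            rw [Real.norm_eq_abs, abs_div, abs_of_pos hApos]
        _ ≤ |w x₀| * c1 ^ p / (1 + ‖y‖) ^ p := hmain
        _ = |w x₀| * c1 ^ p * (1 + ‖y‖) ^ (-p) := by
            rw [Real.rpow_neg (by positivity), div_eq_mul_inv]
  -- piece B
  have hB : IntegrableOn (fun y : Pt n => w y / dist x₀ y ^ p)
      {y : Pt n | ε ≤ dist x₀ y} volume := by
    set c2 : ℝ := ‖x₀‖ / ε + 1 with hc2_def
    have hc2_pos : 0 < c2 := by positivity
    set K : ℝ := ε ^ (-p) + c2 ^ p with hK_def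
    refine Integrable.mono'
      (g := fun y : Pt n => K * (|w y| / (1 + ‖y‖ ^ p))) ?_ ?_ ?_
    · exact (hw.2.const_mul K).restrict
    · exact ((hwm.aemeasurable.div hcontA.measurable.aemeasurable).aestronglyMeasurable).restrict
    · rw [ae_restrict_iff' hmeas_set]
      refine ae_of_all _ fun y hy => ?_
      have hy' : ε ≤ dist x₀ y := hy
      have hdpos : 0 < dist x₀ y := lt_of_lt_of_le hε hy'
      have hApos : 0 < dist x₀ y ^ p := Real.rpow_pos_of_pos hdpos p
      have hBpos : (0:ℝ) < 1 + ‖y‖ ^ p := by positivity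
      have h1 : (1:ℝ) ≤ ε ^ (-p) * dist x₀ y ^ p := by
        rw [Real.rpow_neg hε.le, inv_mul_eq_div, le_div_iff₀ (Real.rpow_pos_of_pos hε p), one_mul]
        exact Real.rpow_le_rpow hε.le hy' hp_pos.le
      have h2 : ‖y‖ ^ p ≤ c2 ^ p * dist x₀ y ^ p := by
        rw [← Real.mul_rpow hc2_pos.le dist_nonneg]
        refine Real.rpow_le_rpow (norm_nonneg y) ?_ hp_pos.le
        have hyn : ‖y‖ ≤ ‖x₀‖ + dist x₀ y := norm_le_of_dist x₀ y
        rw [hc2_def, add_mul, one_mul, div_mul_eq_mul_div]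
        have : ‖x₀‖ ≤ ‖x₀‖ * dist x₀ y / ε := by
          rw [le_div_iff₀ hε]
          nlinarith [norm_nonneg x₀]
        linarith
      have hKA : 1 + ‖y‖ ^ p ≤ K * dist x₀ y ^ p := by
        rw [hK_def, add_mul]; linarith
      have hmain : |w y| / dist x₀ y ^ p ≤ K * |w y| / (1 + ‖y‖ ^ p) := by
        rw [div_le_div_iff₀ hApos hBpos]
        nlinarith [mul_le_mul_of_nonneg_left hKA (abs_nonneg (w y))]
      calc ‖w y / dist x₀ y ^ p‖ = |w y| / dist x₀ y ^ p := by
            rw [Real.norm_eq_abs, abs_div, abs_of_pos hApos]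
        _ ≤ K * |w y| / (1 + ‖y‖ ^ p) := hmain
        _ = K * (|w y| / (1 + ‖y‖ ^ p)) := by rw [mul_div_assoc]
  have heq : (fun y : Pt n => (w x₀ - w y) / dist x₀ y ^ p)
      = fun y : Pt n => w x₀ / dist x₀ y ^ p - w y / dist x₀ y ^ p :=
    funext fun y => sub_div _ _ _
  rw [heq]
  exact hA.sub hB

/-- Narrow region principle. -/
theorem narrow_region_principle
    (n : ℕ) (hn : 0 < n) (s : ℝ) (hs : s ∈ Set.Ioo (0 : ℝ) 1) (Cns : ℝ) (hCns : 0 < Cns) :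
    ∃ C : ℝ, 0 < C ∧
      ∀ (D : Set (Pt n)), IsOpen D → Bornology.IsBounded D →
      ∀ (c w : Pt n → ℝ),
        BddBelow (c '' D) →
        MemL2s n s w →
        C11loc n w D →
        LowerSemicontinuousOn w (closure D) →
        (∀ x ∈ D, ∃ L : ℝ, HasFracLap n s Cns w x L ∧ 0 ≤ L + c x * w x) →
        (∀ x : Pt n, x ∉ D → 0 ≤ w x) →
        widthN n hn D * |sInf (c '' D)| ^ (1 / (2 * s)) ≤ C →
        ∀ x ∈ D, 0 ≤ w x := by
  obtain ⟨hs0, hs1⟩ := hs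
  set p : ℝ := (n : ℝ) + 2 * s with hp_def
  have hp_pos : 0 < p := by positivity
  set ω : ℝ := (volume (ball (0 : Pt n) 1)).toReal with hω_def
  have hω_pos : 0 < ω := ENNReal.toReal_pos (measure_ball_pos _ _ one_pos).ne'
    measure_ball_lt_top.ne
  have h3p : (0:ℝ) < 3 ^ p := Real.rpow_pos_of_pos (by norm_num) p
  set α : ℝ := Cns * ω / 3 ^ p with hα_def
  have hα_pos : 0 < α := by positivity
  set q : ℝ := 1 / (2 * s) with hq_def
  have hq_pos : 0 < q := by positivity
  have hαq_pos : 0 < α ^ q := Real.rpow_pos_of_pos hα_pos q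
  refine ⟨α ^ q / 2, by positivity, ?_⟩
  intro D hDopen hDbdd c w hcbdd hwL2 _hwC11 hwlsc hpde hout hnarrow x hx
  -- notation
  set Li : Fin n := lastIdx n hn with hLi_def
  set e : Pt n := eN n hn with he_def
  have heL : e Li = 1 := by simp [he_def, eN, EuclideanSpace.single_apply, hLi_def]
  have heNorm : ‖e‖ = 1 := by rw [he_def, eN, EuclideanSpace.norm_single, norm_one]
  -- width facts
  set WS : Set ℝ := {d : ℝ | ∃ a ∈ D, ∃ b ∈ D, d = |a Li - b Li|} with hWS_def
  have hWSbdd : BddAbove WS := by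
    obtain ⟨R, hR⟩ := hDbdd.subset_closedBall 0
    refine ⟨2 * R, fun d hd => ?_⟩
    obtain ⟨a, ha, b, hb, rfl⟩ := hd
    have ha' : ‖a‖ ≤ R := by simpa [mem_closedBall, dist_zero_right] using hR ha
    have hb' : ‖b‖ ≤ R := by simpa [mem_closedBall, dist_zero_right] using hR hb
    calc |a Li - b Li| ≤ |a Li| + |b Li| := abs_sub _ _
      _ ≤ ‖a‖ + ‖b‖ := add_le_add (abs_apply_le_norm a Li) (abs_apply_le_norm b Li)
      _ ≤ 2 * R := by linarith
  set d : ℝ := widthN n hn D with hd_def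
  have hwidth_mem : ∀ a ∈ D, ∀ b ∈ D, |a Li - b Li| ≤ d :=
    fun a ha b hb => le_csSup hWSbdd ⟨a, ha, b, hb, rfl⟩
  have hd_pos : 0 < d := by
    obtain ⟨r, hr0, hrball⟩ := Metric.isOpen_iff.1 hDopen x hx
    have hxr : x + (r / 2) • e ∈ D := by
      apply hrball
      rw [mem_ball, dist_eq_norm, add_sub_cancel_left, norm_smul, heNorm]
      rw [Real.norm_eq_abs, abs_of_pos (by linarith)]
      linarith
    have hmem : r / 2 ∈ WS := by
      refine ⟨x + (r / 2) • e, hxr, x, hx, ?_⟩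
      have : (x + (r / 2) • e) Li = x Li + r / 2 := by
        simp [PiLp.add_apply, PiLp.smul_apply, heL, smul_eq_mul]
      rw [this]
      rw [add_sub_cancel_left, abs_of_pos (by linarith)]
    have hmm2 := le_csSup hWSbdd hmem
    have hdWS : d = sSup WS := rfl
    linarith
  -- minimum of w on closure D
  have hKc : IsCompact (closure D) := hDbdd.isCompact_closure
  obtain ⟨x₀, hx₀cl, hx₀min⟩ := lsc_exists_min hKc ⟨x, subset_closure hx⟩ hwlsc
  rcases le_or_gt 0 (w x₀) with h0 | hneg
  · exact le_trans h0 (hx₀min x (subset_closure hx))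
  exfalso
  have hx₀D : x₀ ∈ D := by
    by_contra h
    exact absurd (hout x₀ h) (not_le.2 hneg)
  have hmin_all : ∀ y, w x₀ ≤ w y := by
    intro y
    by_cases hy : y ∈ D
    · exact hx₀min y (subset_closure hy)
    · exact le_trans hneg.le (hout y hy)
  obtain ⟨L, hLfrac, hLpde⟩ := hpde x₀ hx₀D
  -- the test ball S
  set z : Pt n := x₀ + (2 * d) • e with hz_def
  set S : Set (Pt n) := ball z d with hS_def
  have hcoord : ∀ y ∈ S, d < y Li - x₀ Li := by
    intro y hy
    have h1 : |(y - z) Li| ≤ ‖y - z‖ := abs_apply_le_norm _ _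
    have h2 : ‖y - z‖ < d := by
      have hyy := hy
      rw [hS_def, mem_ball, dist_eq_norm] at hyy
      exact hyy
    have h3 : (y - z) Li = y Li - x₀ Li - 2 * d := by
      simp [hz_def, PiLp.sub_apply, PiLp.add_apply, PiLp.smul_apply, heL, smul_eq_mul]
      ring
    rw [h3] at h1
    have h4 := abs_lt.1 (lt_of_le_of_lt h1 h2)
    linarith [h4.1]
  have hSnotD : ∀ y ∈ S, y ∉ D := by
    intro y hy hyD
    have h1 := hwidth_mem y hyD x₀ hx₀D
    have h2 := hcoord y hy
    have := le_abs_self (y Li - x₀ Li)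
    linarith
  have hSdist_lo : ∀ y ∈ S, d ≤ dist x₀ y := by
    intro y hy
    have h1 : |x₀ Li - y Li| ≤ ‖x₀ - y‖ := by
      have := abs_apply_le_norm (x₀ - y) Li
      simpa [PiLp.sub_apply] using this
    rw [← dist_eq_norm] at h1
    have h2 := hcoord y hy
    have h3 : |x₀ Li - y Li| = |y Li - x₀ Li| := abs_sub_comm _ _
    have := le_abs_self (y Li - x₀ Li)
    linarith
  have hSdist_hi : ∀ y ∈ S, dist x₀ y ≤ 3 * d := by
    intro y hy
    have h1 : dist x₀ z = 2 * d := by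
      rw [hz_def, dist_eq_norm, sub_add_cancel_left, norm_neg, norm_smul, heNorm,
        Real.norm_eq_abs, abs_of_pos (by linarith), mul_one]
    have h2 : dist z y < d := by
      have hyy := hy
      rwa [hS_def, mem_ball'] at hyy
    calc dist x₀ y ≤ dist x₀ z + dist z y := dist_triangle _ _ _
      _ ≤ 3 * d := by linarith
  -- volume of S
  haveI : Nontrivial (Pt n) := by
    refine ⟨0, e, fun h => ?_⟩
    have := congrArg (fun v : Pt n => v Li) h
    simp [heL] at this
  have hvolS : (volume S).toReal = d ^ n * ω := by
    rw [hS_def, Measure.addHaar_ball _ _ hd_pos.le, finrank_euclideanSpace_fin,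
      ENNReal.toReal_mul, ENNReal.toReal_ofReal (by positivity), hω_def]
  -- key integral bound, for every ε ∈ Ioc 0 d
  set cS : ℝ := w x₀ / (3 * d) ^ p with hcS_def
  have h3d_pos : (0:ℝ) < (3 * d) ^ p := Real.rpow_pos_of_pos (by linarith) p
  have hcS_neg : cS < 0 := div_neg_of_neg_of_pos hneg h3d_pos
  have hL_le : L ≤ Cns * (d ^ n * ω * cS) := by
    refine le_of_tendsto hLfrac ?_
    filter_upwards [Ioc_mem_nhdsGT hd_pos] with ε hε
    obtain ⟨hε0, hεd⟩ := hε
    set g : Pt n → ℝ := fun y => (w x₀ - w y) / dist x₀ y ^ p with hg_def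
    have hInt : IntegrableOn g {y : Pt n | ε ≤ dist x₀ y} volume :=
      integrableOn_kernel hs0 w hwL2 x₀ hε0
    have hmeas_set : MeasurableSet {y : Pt n | ε ≤ dist x₀ y} :=
      (isClosed_le continuous_const (continuous_const.dist continuous_id)).measurableSet
    have hSsub : S ⊆ {y : Pt n | ε ≤ dist x₀ y} := fun y hy =>
      le_trans hεd (hSdist_lo y hy)
    have hg_nonpos : ∀ y ∈ {y : Pt n | ε ≤ dist x₀ y}, g y ≤ 0 := fun y _ =>
      div_nonpos_iff.2 (Or.inr ⟨sub_nonpos.2 (hmin_all y), Real.rpow_nonneg dist_nonneg p⟩)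
    have h1 : ∫ y in {y : Pt n | ε ≤ dist x₀ y}, g y ≤ ∫ y in S, g y := by
      have hmono := setIntegral_mono_set (hInt.neg)
        ((ae_restrict_iff' hmeas_set).2 (ae_of_all _ fun y hy =>
          neg_nonneg.2 (hg_nonpos y hy)))
        (HasSubset.Subset.eventuallyLE hSsub)
      simp only [Pi.neg_apply, integral_neg] at hmono
      linarith
    have h2 : ∫ y in S, g y ≤ ∫ y in S, cS := by
      refine setIntegral_mono_on (hInt.mono_set hSsub)
        (integrableOn_const measure_ball_lt_top.ne) measurableSet_ball ?_
      intro y hy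
      have hApos : 0 < dist x₀ y ^ p :=
        Real.rpow_pos_of_pos (lt_of_lt_of_le hd_pos (hSdist_lo y hy)) p
      have hwy : 0 ≤ w y := hout y (hSnotD y hy)
      have step1 : g y ≤ w x₀ / dist x₀ y ^ p := by
        rw [hg_def, div_le_div_iff₀ hApos hApos]
        nlinarith
      have step2 : w x₀ / dist x₀ y ^ p ≤ cS := by
        rw [hcS_def, div_le_div_iff₀ hApos h3d_pos]
        have hle : dist x₀ y ^ p ≤ (3 * d) ^ p :=
          Real.rpow_le_rpow dist_nonneg (hSdist_hi y hy) hp_pos.le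
        exact mul_le_mul_of_nonpos_left hle hneg.le
      exact step1.trans step2
    have h3 : ∫ y in S, cS ∂(volume : Measure (Pt n)) = d ^ n * ω * cS := by
      rw [setIntegral_const, smul_eq_mul, measureReal_def, hvolS]
    have hcomb : ∫ y in {y : Pt n | ε ≤ dist x₀ y}, g y ≤ d ^ n * ω * cS :=
      h1.trans (h2.trans_eq h3)
    exact mul_le_mul_of_nonneg_left hcomb hCns.le
  -- rewrite the bound
  have hdn_ne : (d : ℝ) ^ n ≠ 0 := by positivity
  have hd2s_pos : (0:ℝ) < d ^ (2 * s) := Real.rpow_pos_of_pos hd_pos _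
  have hM_eq : Cns * (d ^ n * ω * cS) = α * w x₀ / d ^ (2 * s) := by
    rw [hcS_def, hα_def, Real.mul_rpow (by norm_num) hd_pos.le,
      show p = (n : ℝ) + 2 * s from hp_def, Real.rpow_add hd_pos,
      Real.rpow_natCast]
    field_simp
  have hL_le' : L ≤ α * w x₀ / d ^ (2 * s) := hL_le.trans_eq hM_eq
  have key : 0 ≤ w x₀ * (α / d ^ (2 * s) + c x₀) := by
    have heq3 : w x₀ * (α / d ^ (2 * s) + c x₀)
        = α * w x₀ / d ^ (2 * s) + c x₀ * w x₀ := by ring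
    rw [heq3]
    linarith [hLpde]
  have hsum_nonpos : α / d ^ (2 * s) + c x₀ ≤ 0 := by
    by_contra hpos
    push_neg at hpos
    exact absurd key (not_le.2 (mul_neg_of_neg_of_pos hneg hpos))
  have hinf_le : sInf (c '' D) ≤ c x₀ := csInf_le hcbdd ⟨x₀, hx₀D, rfl⟩
  have habs : α / d ^ (2 * s) ≤ |sInf (c '' D)| := by
    have h1 := neg_le_abs (sInf (c '' D))
    linarith
  have h5 : α ^ q / d ≤ |sInf (c '' D)| ^ q := by
    have hmon := Real.rpow_le_rpow (by positivity) habs hq_pos.le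
    have heq2 : (α / d ^ (2 * s)) ^ q = α ^ q / d := by
      rw [Real.div_rpow hα_pos.le hd2s_pos.le, ← Real.rpow_mul hd_pos.le,
        show (2 * s) * q = 1 by rw [hq_def]; field_simp, Real.rpow_one]
    rw [heq2] at hmon
    exact hmon
  have h6 : d * (α ^ q / d) = α ^ q := by field_simp
  have h7 : α ^ q ≤ d * |sInf (c '' D)| ^ q := by
    have := mul_le_mul_of_nonneg_left h5 hd_pos.le
    linarith [h6]
  linarith
end
end

section
/- Let Ω ⊂ ℝ^n be a bounded open set that is convex in the x_n-direction, i.e. whenever (x', a) ∈ Ω and (x', b) ∈ Ω with a < b, then (x', t) ∈ Ω for all t ∈ (a, b). Let f : ℝ → ℝ be Lipschitz continuous, let φ : ℝ^n → ℝ, and let u ∈ L_{2s} ∩ C^{1,1}_loc(Ω) be continuous on ℝ^n and satisfy (-Δ)^s u(x) = f(u(x)) for all x ∈ Ω and u(x) = φ(x) for all x ∈ ℝ^n \ Ω. Assume condition (H): for any three points x = (x', x_n), y = (x', y_n), z = (x', z_n) lying on a segment parallel to the x_n-axis with y_n < x_n < z_n and y, z ∈ ℝ^n \ Ω, one has φ(y)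 < u(x) < φ(z) if x ∈ Ω, and φ(y) ≤ φ(x) ≤ φ(z) if x ∈ ℝ^n \ Ω. Then u is strictly monotone increasing in x_n in Ω: for every τ > 0 and every x' ∈ ℝ^{n−1}, x_n ∈ ℝ such that both (x', x_n) ∈ Ω and (x', x_n + τ) ∈ Ω, one has u(x', x_n + τ) > u(x', x_n). -/
open MeasureTheory Filter Metric Set

noncomputable section

lemma aux_two_rpow {a b p : ℝ} (ha : 0 ≤ a) (hb : 0 ≤ b) (hp : 0 ≤ p) :
    (a + b) ^ p ≤ 2 ^ p * (a ^ p + b ^ p) := by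
  have h1 : a + b ≤ 2 * max a b := by
    rcases le_total a b with h | h
    · have := max_eq_right h; nlinarith
    · have := max_eq_left h; nlinarith
  have h2 : (a + b) ^ p ≤ (2 * max a b) ^ p :=
    Real.rpow_le_rpow (by positivity) h1 hp
  have h3 : (2 * max a b) ^ p = 2 ^ p * (max a b) ^ p :=
    Real.mul_rpow (by norm_num) (le_max_of_le_left ha)
  have h4 : (max a b) ^ p ≤ a ^ p + b ^ p := by
    rcases le_total a b with h | h
    · rw [max_eq_right h]
      have : 0 ≤ a ^ p := Real.rpow_nonneg ha p
      linarith
    · rw [max_eq_left h]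
      have : 0 ≤ b ^ p := Real.rpow_nonneg hb p
      linarith
  calc (a + b) ^ p ≤ 2 ^ p * (max a b) ^ p := by rw [← h3]; exact h2
    _ ≤ 2 ^ p * (a ^ p + b ^ p) := by
        have : (0:ℝ) < 2 ^ p := Real.rpow_pos_of_pos (by norm_num) p
        nlinarith

lemma aux_shift_weight (n : ℕ) (p : ℝ) (hp : 0 < p) (g : Pt n → ℝ) (hgc : Continuous g)
    (hg : Integrable (fun y : Pt n => |g y| / (1 + ‖y‖ ^ p)) volume) (v : Pt n) :
    Integrable (fun y : Pt n => |g (y + v)| / (1 + ‖y‖ ^ p)) volume := by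
  have h1 : Integrable (fun y : Pt n => |g (y + v)| / (1 + ‖y + v‖ ^ p)) volume :=
    hg.comp_add_right v
  set C : ℝ := 1 + 2 ^ p + 2 ^ p * ‖v‖ ^ p with hC
  have hCpos : 0 < C := by
    have h2p : (0:ℝ) < 2 ^ p := Real.rpow_pos_of_pos (by norm_num) p
    have : 0 ≤ ‖v‖ ^ p := Real.rpow_nonneg (norm_nonneg v) p
    nlinarith
  refine (h1.const_mul C).mono' ?_ ?_
  · exact Measurable.aestronglyMeasurable (by fun_prop)
  · filter_upwards with y
    have hy : (0:ℝ) < 1 + ‖y‖ ^ p := by positivity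
    have hyv : (0:ℝ) < 1 + ‖y + v‖ ^ p := by positivity
    have hkey : 1 + ‖y + v‖ ^ p ≤ C * (1 + ‖y‖ ^ p) := by
      have h2 : ‖y + v‖ ^ p ≤ (‖y‖ + ‖v‖) ^ p :=
        Real.rpow_le_rpow (norm_nonneg _) (norm_add_le y v) hp.le
      have h3 : (‖y‖ + ‖v‖) ^ p ≤ 2 ^ p * (‖y‖ ^ p + ‖v‖ ^ p) :=
        aux_two_rpow (norm_nonneg _) (norm_nonneg _) hp.le
      have h2p : (0:ℝ) < 2 ^ p := Real.rpow_pos_of_pos (by norm_num) p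
      have hyp : 0 ≤ ‖y‖ ^ p := Real.rpow_nonneg (norm_nonneg _) p
      have hvp : 0 ≤ ‖v‖ ^ p := Real.rpow_nonneg (norm_nonneg _) p
      rw [hC]; nlinarith [mul_nonneg (mul_nonneg h2p.le hvp) hyp, mul_nonneg h2p.le hyp]
    rw [Real.norm_eq_abs, abs_of_nonneg (by positivity)]
    rw [div_le_iff₀ hy]
    have h5 : |g (y + v)| / (1 + ‖y + v‖ ^ p) * (1 + ‖y + v‖ ^ p) = |g (y + v)| := by
      field_simp
    calc |g (y + v)| = |g (y + v)| / (1 + ‖y + v‖ ^ p) * (1 + ‖y + v‖ ^ p) := h5.symm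
      _ ≤ |g (y + v)| / (1 + ‖y + v‖ ^ p) * (C * (1 + ‖y‖ ^ p)) := by
          apply mul_le_mul_of_nonneg_left hkey (by positivity)
      _ = C * (|g (y + v)| / (1 + ‖y + v‖ ^ p)) * (1 + ‖y‖ ^ p) := by ring

lemma aux_integrableOn (n : ℕ) (p : ℝ) (hnp : (n : ℝ) < p) (g : Pt n → ℝ) (hgc : Continuous g)
    (hg : Integrable (fun y : Pt n => |g y| / (1 + ‖y‖ ^ p)) volume) (x : Pt n) (a ε : ℝ)
    (hε : 0 < ε) :
    IntegrableOn (fun y : Pt n => (a - g y) / dist x y ^ p) {y : Pt n | ε ≤ dist x y} volume := by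
  have hp : 0 < p := lt_of_le_of_lt (Nat.cast_nonneg n) hnp
  set c : ℝ := (1 + ‖x‖) / ε + 1 with hc
  have hcpos : 0 < c := by positivity
  have hfr : (Module.finrank ℝ (Pt n) : ℝ) < p := by
    rwa [finrank_euclideanSpace_fin]
  have hint1 : Integrable (fun y : Pt n => (1 + ‖y‖) ^ (-p)) volume :=
    integrable_one_add_norm hfr
  have hG : Integrable (fun y : Pt n =>
      |a| * c ^ p * (1 + ‖y‖) ^ (-p) + 2 * c ^ p * (|g y| / (1 + ‖y‖ ^ p))) volume :=
    (hint1.const_mul _).add (hg.const_mul _)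
  have hS : MeasurableSet {y : Pt n | ε ≤ dist x y} :=
    (isClosed_le continuous_const (continuous_const.dist continuous_id)).measurableSet
  refine (hG.integrableOn).mono' (Measurable.aestronglyMeasurable (by fun_prop)).restrict ?_
  rw [ae_restrict_iff' hS]
  filter_upwards with y hy
  have hy' : ε ≤ dist x y := hy
  have hd : 0 < dist x y := lt_of_lt_of_le hε hy'
  have hdp : 0 < dist x y ^ p := Real.rpow_pos_of_pos hd p
  have h1y : (0:ℝ) < 1 + ‖y‖ := by positivity
  have h1yp : 0 < (1 + ‖y‖) ^ p := Real.rpow_pos_of_pos h1y p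
  have key1 : 1 + ‖y‖ ≤ c * dist x y := by
    have t1 : ‖y‖ ≤ dist x y + ‖x‖ := by
      have := dist_triangle y x 0
      rw [dist_zero_right] at this
      have h0 : dist y 0 = ‖y‖ := dist_zero_right y
      rw [← h0]
      calc dist y 0 ≤ dist y x + dist x 0 := dist_triangle y x 0
        _ = dist x y + ‖x‖ := by rw [dist_comm, dist_zero_right]
    have t2 : 1 + ‖x‖ ≤ (1 + ‖x‖) / ε * dist x y := by
      rw [div_mul_eq_mul_div, le_div_iff₀ hε]
      have : (0:ℝ) ≤ 1 + ‖x‖ := by positivity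
      nlinarith
    rw [hc]; nlinarith
  have key2 : (1 + ‖y‖) ^ p ≤ c ^ p * dist x y ^ p := by
    calc (1 + ‖y‖) ^ p ≤ (c * dist x y) ^ p :=
          Real.rpow_le_rpow (by positivity) key1 hp.le
      _ = c ^ p * dist x y ^ p := Real.mul_rpow hcpos.le dist_nonneg
  have key3 : (dist x y ^ p)⁻¹ ≤ c ^ p * ((1 + ‖y‖) ^ p)⁻¹ := by
    have haux : (1 + ‖y‖) ^ p * (dist x y ^ p)⁻¹ ≤ c ^ p := by
      rw [← div_eq_mul_inv, div_le_iff₀ hdp]; exact key2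
    calc (dist x y ^ p)⁻¹ = ((1 + ‖y‖) ^ p)⁻¹ * ((1 + ‖y‖) ^ p * (dist x y ^ p)⁻¹) := by
          field_simp
      _ ≤ ((1 + ‖y‖) ^ p)⁻¹ * c ^ p := mul_le_mul_of_nonneg_left haux (by positivity)
      _ = c ^ p * ((1 + ‖y‖) ^ p)⁻¹ := mul_comm _ _
  have key4 : ((1 + ‖y‖) ^ p)⁻¹ ≤ 2 * (1 + ‖y‖ ^ p)⁻¹ := by
    have e1 : (1:ℝ) ≤ (1 + ‖y‖) ^ p := by
      have := Real.rpow_le_rpow (le_refl (0:ℝ) |>.trans zero_le_one) (by linarith [norm_nonneg y] : (1:ℝ) ≤ 1 + ‖y‖) hp.le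
      simpa [Real.one_rpow] using this
    have e2 : ‖y‖ ^ p ≤ (1 + ‖y‖) ^ p :=
      Real.rpow_le_rpow (norm_nonneg y) (by linarith) hp.le
    have e3 : 1 + ‖y‖ ^ p ≤ 2 * (1 + ‖y‖) ^ p := by linarith
    have h4 : (1 + ‖y‖ ^ p) / 2 ≤ (1 + ‖y‖) ^ p := by linarith
    rw [inv_eq_one_div, inv_eq_one_div]
    calc 1 / (1 + ‖y‖) ^ p ≤ 1 / ((1 + ‖y‖ ^ p) / 2) :=
          one_div_le_one_div_of_le (by positivity) h4
      _ = 2 / (1 + ‖y‖ ^ p) := one_div_div _ _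
      _ = 2 * (1 / (1 + ‖y‖ ^ p)) := by ring
  have hbig : |(a - g y) / dist x y ^ p| ≤
      |a| * c ^ p * (1 + ‖y‖) ^ (-p) + 2 * c ^ p * (|g y| / (1 + ‖y‖ ^ p)) := by
    have h1 : (0:ℝ) < 1 + ‖y‖ ^ p := by positivity
    have hrneg : (1 + ‖y‖) ^ (-p) = ((1 + ‖y‖) ^ p)⁻¹ := Real.rpow_neg h1y.le p
    calc |(a - g y) / dist x y ^ p| = |a - g y| * (dist x y ^ p)⁻¹ := by
          rw [abs_div, abs_of_pos hdp, div_eq_mul_inv]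
      _ ≤ (|a| + |g y|) * (dist x y ^ p)⁻¹ :=
          mul_le_mul_of_nonneg_right (abs_sub a (g y)) (by positivity)
      _ ≤ (|a| + |g y|) * (c ^ p * ((1 + ‖y‖) ^ p)⁻¹) :=
          mul_le_mul_of_nonneg_left key3 (by positivity)
      _ = |a| * (c ^ p * ((1 + ‖y‖) ^ p)⁻¹) + c ^ p * (|g y| * ((1 + ‖y‖) ^ p)⁻¹) := by ring
      _ ≤ |a| * (c ^ p * ((1 + ‖y‖) ^ p)⁻¹) + c ^ p * (|g y| * (2 * (1 + ‖y‖ ^ p)⁻¹)) := by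
          have := mul_le_mul_of_nonneg_left key4 (abs_nonneg (g y))
          have hcp : (0:ℝ) ≤ c ^ p := (Real.rpow_pos_of_pos hcpos p).le
          nlinarith
      _ = |a| * c ^ p * (1 + ‖y‖) ^ (-p) + 2 * c ^ p * (|g y| / (1 + ‖y‖ ^ p)) := by
          rw [hrneg, div_eq_mul_inv]; ring
  calc ‖(a - g y) / dist x y ^ p‖ = |(a - g y) / dist x y ^ p| := rfl
    _ ≤ _ := hbig


lemma aux_shift_integral (n : ℕ) (F : Pt n → ℝ) (x0 v : Pt n) (ε : ℝ) :
    (∫ y in {y : Pt n | ε ≤ dist (x0 + v) y}, F y) =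
      ∫ y in {y : Pt n | ε ≤ dist x0 y}, F (y + v) := by
  have hS' : MeasurableSet {y : Pt n | ε ≤ dist (x0 + v) y} :=
    (isClosed_le continuous_const (continuous_const.dist continuous_id)).measurableSet
  have hS : MeasurableSet {y : Pt n | ε ≤ dist x0 y} :=
    (isClosed_le continuous_const (continuous_const.dist continuous_id)).measurableSet
  rw [← integral_indicator hS', ← integral_indicator hS,
    ← integral_add_right_eq_self (({y : Pt n | ε ≤ dist (x0 + v) y}).indicator F) v]
  congr 1
  funext w
  by_cases hw : ε ≤ dist x0 w
  · rw [Set.indicator_of_mem (by rw [Set.mem_setOf_eq, dist_add_right]; exact hw),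
      Set.indicator_of_mem (by exact hw)]
  · rw [Set.indicator_of_notMem (by rw [Set.mem_setOf_eq, dist_add_right]; exact hw),
      Set.indicator_of_notMem (by exact hw)]

lemma key_estimate (n : ℕ) (hn : 0 < n) (s : ℝ) (hs0 : 0 < s) (Cns : ℝ) (hCns : 0 < Cns)
    (u : Pt n → ℝ)
    (huI : Integrable (fun y : Pt n => |u y| / (1 + ‖y‖ ^ ((n : ℝ) + 2 * s))) volume)
    (hucont : Continuous u) (v x0 : Pt n) (L1 L2 : ℝ)
    (h1 : HasFracLap n s Cns u (x0 + v) L1) (h2 : HasFracLap n s Cns u x0 L2)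
    (m : ℝ) (hm : u (x0 + v) - u x0 = m) (hm0 : m ≤ 0)
    (hmin : ∀ y : Pt n, m ≤ u (y + v) - u y)
    (z : Pt n) (r c R0 : ℝ) (hr : 0 < r) (hc : 0 < c) (hR0 : 0 < R0)
    (hball : ∀ y ∈ ball z r, c ≤ u (y + v) - u y)
    (hdist : ∀ y ∈ ball z r, dist x0 y ≤ R0) :
    L1 - L2 ≤ -(Cns * ((volume (ball z r)).toReal / 2 * (c / R0 ^ ((n : ℝ) + 2 * s)))) := by
  have hnp : (n : ℝ) < (n : ℝ) + 2 * s := by linarith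
  have hp : (0:ℝ) < (n : ℝ) + 2 * s := lt_of_le_of_lt (Nat.cast_nonneg n) hnp
  have huIshift : Integrable (fun y : Pt n => |u (y + v)| / (1 + ‖y‖ ^ ((n : ℝ) + 2 * s)))
      volume := aux_shift_weight n _ hp u hucont huI v
  have hucont' : Continuous fun y : Pt n => u (y + v) :=
    hucont.comp (continuous_id.add continuous_const)
  have hintA : ∀ ε : ℝ, 0 < ε → IntegrableOn
      (fun y : Pt n => (u (x0 + v) - u (y + v)) / dist x0 y ^ ((n : ℝ) + 2 * s))
      {y : Pt n | ε ≤ dist x0 y} volume := fun ε hε =>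
    aux_integrableOn n _ hnp (fun y => u (y + v)) hucont' huIshift x0 (u (x0 + v)) ε hε
  have hintB : ∀ ε : ℝ, 0 < ε → IntegrableOn
      (fun y : Pt n => (u x0 - u y) / dist x0 y ^ ((n : ℝ) + 2 * s))
      {y : Pt n | ε ≤ dist x0 y} volume := fun ε hε =>
    aux_integrableOn n _ hnp u hucont huI x0 (u x0) ε hε
  have h1' : Tendsto (fun ε : ℝ => Cns * ∫ y in {y : Pt n | ε ≤ dist x0 y},
      (u (x0 + v) - u (y + v)) / dist x0 y ^ ((n : ℝ) + 2 * s))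
      (nhdsWithin 0 (Set.Ioi 0)) (nhds L1) := by
    have h1t : Tendsto (fun ε : ℝ => Cns * ∫ y in {y : Pt n | ε ≤ dist (x0 + v) y},
        (u (x0 + v) - u y) / dist (x0 + v) y ^ ((n : ℝ) + 2 * s))
        (nhdsWithin 0 (Set.Ioi 0)) (nhds L1) := h1
    apply h1t.congr
    intro ε
    congr 1
    rw [aux_shift_integral n
      (fun y => (u (x0 + v) - u y) / dist (x0 + v) y ^ ((n : ℝ) + 2 * s)) x0 v ε]
    apply setIntegral_congr_fun
    · exact (isClosed_le continuous_const (continuous_const.dist continuous_id)).measurableSet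
    · intro y _
      simp only [dist_add_right]
  have h2' : Tendsto (fun ε : ℝ => Cns * ∫ y in {y : Pt n | ε ≤ dist x0 y},
      (u x0 - u y) / dist x0 y ^ ((n : ℝ) + 2 * s))
      (nhdsWithin 0 (Set.Ioi 0)) (nhds L2) := h2
  have hdiff := h1'.sub h2'
  have hfun : ∀ ε : ℝ, 0 < ε →
      ((Cns * ∫ y in {y : Pt n | ε ≤ dist x0 y},
        (u (x0 + v) - u (y + v)) / dist x0 y ^ ((n : ℝ) + 2 * s)) -
       Cns * ∫ y in {y : Pt n | ε ≤ dist x0 y},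
        (u x0 - u y) / dist x0 y ^ ((n : ℝ) + 2 * s)) =
      Cns * ∫ y in {y : Pt n | ε ≤ dist x0 y},
        (m - (u (y + v) - u y)) / dist x0 y ^ ((n : ℝ) + 2 * s) := by
    intro ε hε
    rw [← mul_sub, ← integral_sub (hintA ε hε) (hintB ε hε)]
    congr 1
    apply integral_congr_ae
    filter_upwards with y
    rw [div_sub_div_same]
    congr 1
    rw [← hm]; ring
  have hmain : Tendsto (fun ε : ℝ => Cns * ∫ y in {y : Pt n | ε ≤ dist x0 y},
      (m - (u (y + v) - u y)) / dist x0 y ^ ((n : ℝ) + 2 * s))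
      (nhdsWithin 0 (Set.Ioi 0)) (nhds (L1 - L2)) := by
    apply Tendsto.congr' _ hdiff
    exact Filter.eventually_of_mem self_mem_nhdsWithin fun ε hε => hfun ε hε
  apply le_of_tendsto hmain
  apply Filter.eventually_of_mem (Ioc_mem_nhdsGT (by positivity : (0:ℝ) < r / 2))
  intro ε hε
  obtain ⟨hε0, hεr⟩ := hε
  set S : Set (Pt n) := {y : Pt n | ε ≤ dist x0 y} with hSdef
  set A : Set (Pt n) := ball z r \ ball x0 (r / 2) with hAdef
  set h : Pt n → ℝ := fun y => (m - (u (y + v) - u y)) / dist x0 y ^ ((n : ℝ) + 2 * s)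
    with hhdef
  have hAS : A ⊆ S := by
    intro y hy
    have h2 : r / 2 ≤ dist y x0 := not_lt.mp fun hlt => hy.2 (mem_ball.mpr hlt)
    show ε ≤ dist x0 y
    rw [dist_comm]; linarith
  have hInth : IntegrableOn h S volume := by
    have heq : h = fun y =>
        ((u (x0 + v) - u (y + v)) / dist x0 y ^ ((n : ℝ) + 2 * s)) -
        ((u x0 - u y) / dist x0 y ^ ((n : ℝ) + 2 * s)) := by
      funext y
      rw [hhdef, div_sub_div_same]
      congr 1
      rw [← hm]; ring
    rw [heq]
    exact (hintA ε hε0).sub (hintB ε hε0)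
  have hnonpos : ∀ y : Pt n, h y ≤ 0 := fun y =>
    div_nonpos_of_nonpos_of_nonneg (by have := hmin y; linarith)
      (Real.rpow_nonneg dist_nonneg _)
  have step1 : ∫ y in S, h y ≤ ∫ y in A, h y := by
    have hneg : ∫ y in A, -h y ≤ ∫ y in S, -h y := by
      apply setIntegral_mono_set hInth.neg
      · exact Filter.Eventually.of_forall fun y => neg_nonneg.mpr (hnonpos y)
      · exact HasSubset.Subset.eventuallyLE hAS
    rw [integral_neg, integral_neg] at hneg
    linarith
  have hAmeas : MeasurableSet A := measurableSet_ball.diff measurableSet_ball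
  have hAfin : volume A < ⊤ := lt_of_le_of_lt (measure_mono Set.diff_subset) measure_ball_lt_top
  have step2 : ∫ y in A, h y ≤ ∫ _y in A, (-(c / R0 ^ ((n : ℝ) + 2 * s))) := by
    apply setIntegral_mono_on (hInth.mono_set hAS)
      (integrableOn_const hAfin.ne) hAmeas
    intro y hy
    have hyb : y ∈ ball z r := hy.1
    have hyd : r / 2 ≤ dist x0 y := by
      rw [dist_comm]; exact not_lt.mp fun hlt => hy.2 (mem_ball.mpr hlt)
    have hd0 : 0 < dist x0 y := lt_of_lt_of_le (by linarith) hyd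
    have hdp : 0 < dist x0 y ^ ((n : ℝ) + 2 * s) := Real.rpow_pos_of_pos hd0 _
    have hRp : 0 < R0 ^ ((n : ℝ) + 2 * s) := Real.rpow_pos_of_pos hR0 _
    have hdR : dist x0 y ^ ((n : ℝ) + 2 * s) ≤ R0 ^ ((n : ℝ) + 2 * s) :=
      Real.rpow_le_rpow dist_nonneg (hdist y hyb) hp.le
    have hnum : m - (u (y + v) - u y) ≤ -c := by have := hball y hyb; linarith
    calc h y ≤ (-c) / dist x0 y ^ ((n : ℝ) + 2 * s) := by
          rw [hhdef]
          exact div_le_div_of_nonneg_right hnum hdp.le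
      _ = -(c / dist x0 y ^ ((n : ℝ) + 2 * s)) := by rw [neg_div]
      _ ≤ -(c / R0 ^ ((n : ℝ) + 2 * s)) := by
          apply neg_le_neg
          gcongr
  have step3 : (∫ _y in A, (-(c / R0 ^ ((n : ℝ) + 2 * s))) : ℝ) =
      (volume A).toReal * (-(c / R0 ^ ((n : ℝ) + 2 * s))) := by
    rw [setIntegral_const, smul_eq_mul, measureReal_def]
  have hfin1 : volume (ball z r) ≠ ⊤ := measure_ball_lt_top.ne
  have hform1 : (volume (ball z r)).toReal =
      r ^ n * (volume (ball (0 : Pt n) 1)).toReal := by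
    rw [Measure.addHaar_ball_of_pos _ z hr, ENNReal.toReal_mul, ENNReal.toReal_ofReal
      (by positivity), finrank_euclideanSpace_fin]
  have hform2 : (volume (ball x0 (r / 2))).toReal =
      (r / 2) ^ n * (volume (ball (0 : Pt n) 1)).toReal := by
    rw [Measure.addHaar_ball_of_pos _ x0 (by positivity), ENNReal.toReal_mul,
      ENNReal.toReal_ofReal (by positivity), finrank_euclideanSpace_fin]
  have hble : volume (ball x0 (r / 2)) ≤ volume (ball z r) := by
    rw [Measure.addHaar_ball_of_pos _ x0 (by positivity : (0:ℝ) < r / 2),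
      Measure.addHaar_ball_of_pos _ z hr]
    apply mul_le_mul_left
    apply ENNReal.ofReal_le_ofReal
    apply pow_le_pow_left₀ (by positivity)
    linarith
  have hhalf : (volume (ball z r)).toReal / 2 ≤ (volume A).toReal := by
    have hmono : (volume (ball z r) - volume (ball x0 (r / 2))).toReal ≤ (volume A).toReal :=
      ENNReal.toReal_mono hAfin.ne (le_measure_diff)
    rw [ENNReal.toReal_sub_of_le hble hfin1] at hmono
    have hpow : (r / 2) ^ n ≤ r ^ n / 2 := by
      have h2n : (2:ℝ) ≤ 2 ^ n := by
        calc (2:ℝ) = 2 ^ 1 := (pow_one 2).symm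
          _ ≤ 2 ^ n := pow_le_pow_right₀ (by norm_num) hn
      rw [div_pow]
      gcongr
    have hV : 0 ≤ (volume (ball (0 : Pt n) 1)).toReal := ENNReal.toReal_nonneg
    have hb2 : (volume (ball x0 (r / 2))).toReal ≤ (volume (ball z r)).toReal / 2 := by
      rw [hform1, hform2]
      calc (r / 2) ^ n * (volume (ball (0 : Pt n) 1)).toReal
          ≤ r ^ n / 2 * (volume (ball (0 : Pt n) 1)).toReal :=
            mul_le_mul_of_nonneg_right hpow hV
        _ = r ^ n * (volume (ball (0 : Pt n) 1)).toReal / 2 := by ring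
    linarith
  have hfac : -(c / R0 ^ ((n : ℝ) + 2 * s)) ≤ 0 := by
    apply neg_nonpos.mpr
    positivity
  calc Cns * ∫ y in S, h y ≤ Cns * ((volume A).toReal * (-(c / R0 ^ ((n : ℝ) + 2 * s)))) := by
        apply mul_le_mul_of_nonneg_left _ hCns.le
        exact (step1.trans step2).trans_eq step3
    _ ≤ Cns * ((volume (ball z r)).toReal / 2 * (-(c / R0 ^ ((n : ℝ) + 2 * s)))) := by
        apply mul_le_mul_of_nonneg_left _ hCns.le
        exact mul_le_mul_of_nonpos_right hhalf hfac
    _ = -(Cns * ((volume (ball z r)).toReal / 2 * (c / R0 ^ ((n : ℝ) + 2 * s)))) := by ring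

set_option maxHeartbeats 2000000 in
/-- Monotonicity in the `x_n` direction for solutions of `(-Δ)^s u = f(u)` in a bounded
domain `Ω` convex in the `x_n` direction, under the exterior condition (H). -/
theorem monotonicity_bounded_domain
    (n : ℕ) (hn : 0 < n) (s : ℝ) (hs : s ∈ Set.Ioo (0 : ℝ) 1) (Cns : ℝ) (hCns : 0 < Cns)
    (Ω : Set (Pt n)) (hΩopen : IsOpen Ω) (hΩbdd : Bornology.IsBounded Ω)
    (hconv : ∀ (p : Pt n) (a b t : ℝ), a < b → t ∈ Set.Ioo a b →
      p + a • eN n hn ∈ Ω → p + b • eN n hn ∈ Ω → p + t • eN n hn ∈ Ω)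
    (f : ℝ → ℝ) (hf : ∃ K : NNReal, LipschitzWith K f)
    (φ u : Pt n → ℝ)
    (huL : MemL2s n s u) (huC : C11loc n u Ω) (hucont : Continuous u)
    (heq : ∀ x ∈ Ω, HasFracLap n s Cns u x (f (u x)))
    (hbc : ∀ x : Pt n, x ∉ Ω → u x = φ x)
    (hH1 : ∀ (p : Pt n) (yn xn zn : ℝ), yn < xn → xn < zn →
      p + yn • eN n hn ∉ Ω → p + zn • eN n hn ∉ Ω → p + xn • eN n hn ∈ Ω →
      φ (p + yn • eN n hn) < u (p + xn • eN n hn) ∧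
        u (p + xn • eN n hn) < φ (p + zn • eN n hn))
    (hH2 : ∀ (p : Pt n) (yn xn zn : ℝ), yn < xn → xn < zn →
      p + yn • eN n hn ∉ Ω → p + zn • eN n hn ∉ Ω → p + xn • eN n hn ∉ Ω →
      φ (p + yn • eN n hn) ≤ φ (p + xn • eN n hn) ∧
        φ (p + xn • eN n hn) ≤ φ (p + zn • eN n hn)) :
    ∀ τ : ℝ, 0 < τ → ∀ x : Pt n, x ∈ Ω → x + τ • eN n hn ∈ Ω →
      u x < u (x + τ • eN n hn) := by
  intro τ hτ x hxΩ hxτΩ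
  obtain ⟨K, hK⟩ := hf
  set e : Pt n := eN n hn with he
  have hene : ‖e‖ = 1 := by
    rw [he]; unfold eN; rw [EuclideanSpace.norm_single]; norm_num
  have hsmul : ∀ t : ℝ, ‖t • e‖ = |t| := fun t => by
    rw [norm_smul, hene, Real.norm_eq_abs, mul_one]
  obtain ⟨R', hR'⟩ := hΩbdd.subset_ball 0
  set R : ℝ := |R'| + 1 with hRdef
  have hRpos : 0 < R := by positivity
  have hΩR : Ω ⊆ ball (0 : Pt n) R :=
    hR'.trans (ball_subset_ball (by rw [hRdef]; linarith [le_abs_self R']))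
  have hfar : ∀ (q : Pt n) (t : ℝ), R + ‖q‖ < |t| → q + t • e ∉ Ω := by
    intro q t ht hmem
    have h1 := mem_ball_zero_iff.mp (hΩR hmem)
    have h2 : ‖t • e‖ ≤ ‖q + t • e‖ + ‖q‖ := by
      calc ‖t • e‖ = ‖(q + t • e) - q‖ := by congr 1; abel
        _ ≤ ‖q + t • e‖ + ‖q‖ := norm_sub_le _ _
    rw [hsmul] at h2
    linarith
  have h0e : ∀ q : Pt n, q + (0 : ℝ) • e = q := fun q => by rw [zero_smul, add_zero]
  -- positivity/nonnegativity of w_t outside the doubled domain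
  have hout1 : ∀ t : ℝ, 0 < t → ∀ y : Pt n, y ∈ Ω → y + t • e ∉ Ω →
      u y < u (y + t • e) := by
    intro t ht y hy hyt
    have hM : y + (-(R + ‖y‖ + 1)) • e ∉ Ω := by
      apply hfar
      rw [abs_neg, abs_of_pos (by positivity)]
      linarith
    have hmain := (hH1 y (-(R + ‖y‖ + 1)) 0 t (by linarith [norm_nonneg y]) ht hM hyt
      (by rw [h0e]; exact hy)).2
    rw [h0e] at hmain
    rwa [← hbc _ hyt] at hmain
  have hout2 : ∀ t : ℝ, 0 < t → ∀ y : Pt n, y ∉ Ω → y + t • e ∈ Ω →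
      u y < u (y + t • e) := by
    intro t ht y hy hyt
    have hM : y + (R + ‖y‖ + t + 1) • e ∉ Ω := by
      apply hfar
      rw [abs_of_pos (by positivity)]
      linarith
    have hmain := (hH1 y 0 t (R + ‖y‖ + t + 1) ht (by linarith [norm_nonneg y])
      (by rw [h0e]; exact hy) hM hyt).1
    rw [h0e] at hmain
    rwa [← hbc _ hy] at hmain
  have hout3 : ∀ t : ℝ, 0 < t → ∀ y : Pt n, y ∉ Ω → y + t • e ∉ Ω →
      u y ≤ u (y + t • e) := by
    intro t ht y hy hyt
    have hM : y + (-(R + ‖y‖ + 1)) • e ∉ Ω := by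
      apply hfar
      rw [abs_neg, abs_of_pos (by positivity)]
      linarith
    have hmain := (hH2 y (-(R + ‖y‖ + 1)) 0 t (by linarith [norm_nonneg y]) ht hM hyt
      (by rw [h0e]; exact hy)).2
    rw [h0e] at hmain
    rw [← hbc _ hy, ← hbc _ hyt] at hmain
    exact hmain
  have hW : ∀ t : ℝ, 0 < t → ∀ y : Pt n, ¬(y ∈ Ω ∧ y + t • e ∈ Ω) →
      u y ≤ u (y + t • e) := by
    intro t ht y hy
    by_cases h1 : y ∈ Ω
    · by_cases h2 : y + t • e ∈ Ω
      · exact absurd ⟨h1, h2⟩ hy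
      · exact (hout1 t ht y h1 h2).le
    · by_cases h2 : y + t • e ∈ Ω
      · exact (hout2 t ht y h1 h2).le
      · exact hout3 t ht y h1 h2
  have hmix : ∀ t : ℝ, 0 < t → ∃ z : Pt n, z ∈ Ω ∧ z + t • e ∉ Ω := by
    intro t ht
    have hT0 : (0 : ℝ) ∈ {σ : ℝ | x + σ • e ∈ Ω} := by
      rw [Set.mem_setOf_eq, h0e]; exact hxΩ
    have hTb : BddAbove {σ : ℝ | x + σ • e ∈ Ω} := by
      refine ⟨R + ‖x‖, fun σ hσ => ?_⟩
      by_contra hgt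
      push_neg at hgt
      exact hfar x σ (lt_of_lt_of_le hgt (le_abs_self σ)) hσ
    obtain ⟨σ, hσT, hσgt⟩ := exists_lt_of_lt_csSup ⟨0, hT0⟩
      (show sSup {σ : ℝ | x + σ • e ∈ Ω} - t < sSup {σ : ℝ | x + σ • e ∈ Ω} by linarith)
    refine ⟨x + σ • e, hσT, ?_⟩
    have hsum : x + σ • e + t • e = x + (σ + t) • e := by rw [add_smul]; abel
    rw [hsum]
    intro hmem
    have hle := le_csSup hTb (hmem : (σ + t) ∈ {σ : ℝ | x + σ • e ∈ Ω})
    linarith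
  -- global nonnegativity of w_t for all t > 0 (sliding)
  have hglob : ∀ t : ℝ, 0 < t → ∀ y : Pt n, u y ≤ u (y + t • e) := by
    set T' : Set ℝ :=
      {t : ℝ | 0 < t ∧ ∀ t' : ℝ, t ≤ t' → ∀ y : Pt n, u y ≤ u (y + t' • e)} with hT'
    have hbig : (2 * R + 1) ∈ T' := by
      constructor
      · linarith
      · intro t' ht' y
        apply hW t' (by linarith) y
        rintro ⟨hy1, hy2⟩
        have n1 := mem_ball_zero_iff.mp (hΩR hy1)
        have n2 := mem_ball_zero_iff.mp (hΩR hy2)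
        have h2 : ‖t' • e‖ ≤ ‖y + t' • e‖ + ‖y‖ := by
          calc ‖t' • e‖ = ‖(y + t' • e) - y‖ := by congr 1; abel
            _ ≤ ‖y + t' • e‖ + ‖y‖ := norm_sub_le _ _
        rw [hsmul, abs_of_pos (by linarith)] at h2
        linarith
    have hbdd : BddBelow T' := ⟨0, fun t ht => ht.1.le⟩
    have hge : ∀ t : ℝ, sInf T' < t → ∀ y : Pt n, u y ≤ u (y + t • e) := by
      intro t htg y
      obtain ⟨t0, ht0T, ht0lt⟩ := exists_lt_of_csInf_lt ⟨_, hbig⟩ htg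
      exact ht0T.2 t ht0lt.le y
    by_cases hpos : 0 < sInf T'
    swap
    · intro t ht y
      exact hge t (by push_neg at hpos; linarith) y
    · exfalso
      set τs := sInf T' with hτs
      have hstar : ∀ y : Pt n, u y ≤ u (y + τs • e) := by
        intro y
        have hcont : Tendsto (fun t : ℝ => u (y + t • e))
            (nhdsWithin τs (Set.Ioi τs)) (nhds (u (y + τs • e))) := by
          apply Tendsto.mono_left _ nhdsWithin_le_nhds
          exact ((hucont.comp (continuous_const.add
            (continuous_id.smul continuous_const))).tendsto τs)
        apply ge_of_tendsto hcont
        exact Filter.eventually_of_mem self_mem_nhdsWithin fun t ht => hge t ht y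
      obtain ⟨zh, hzhΩ, hzhout⟩ := hmix τs hpos
      have hc2 : 0 < u (zh + τs • e) - u zh := sub_pos.mpr (hout1 τs hpos zh hzhΩ hzhout)
      set c := (u (zh + τs • e) - u zh) / 2 with hcdef
      have hc : 0 < c := by rw [hcdef]; linarith
      have hopen : IsOpen {y : Pt n | c < u (y + τs • e) - u y} :=
        isOpen_lt continuous_const
          ((hucont.comp (continuous_id.add continuous_const)).sub hucont)
      have hzin : zh ∈ {y : Pt n | c < u (y + τs • e) - u y} := by
        rw [Set.mem_setOf_eq, hcdef]; linarith
      obtain ⟨r, hr, hrsub⟩ := Metric.isOpen_iff.mp hopen zh hzin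
      set R0 : ℝ := 2 * R + r with hR0def
      have hR0pos : 0 < R0 := by rw [hR0def]; linarith
      set κ := Cns * ((volume (ball zh r)).toReal / 2 *
        (c / 2 / R0 ^ ((n : ℝ) + 2 * s))) with hκ
      have hvol : 0 < (volume (ball zh r)).toReal :=
        ENNReal.toReal_pos (measure_ball_pos volume zh hr).ne' measure_ball_lt_top.ne
      have hκpos : 0 < κ := by
        rw [hκ]
        have := Real.rpow_pos_of_pos hR0pos ((n : ℝ) + 2 * s)
        positivity
      set KR : ℝ := (K : ℝ) + 1 with hKR'
      have hKR : 0 < KR := by rw [hKR']; positivity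
      have hLip : ∀ a b : ℝ, |f a - f b| ≤ KR * |a - b| := by
        intro a b
        have h1 := hK.dist_le_mul a b
        rw [Real.dist_eq, Real.dist_eq] at h1
        have h2 : (K : ℝ) * |a - b| ≤ KR * |a - b| :=
          mul_le_mul_of_nonneg_right (by rw [hKR']; linarith) (abs_nonneg _)
        linarith
      set θ := min (c / 2) (κ / (2 * KR)) with hθ
      have hθpos : 0 < θ := lt_min (by linarith) (by positivity)
      set M : ℝ := R + r + ‖zh‖ + τs + 1 with hM
      have hucomp : UniformContinuousOn u (closedBall (0 : Pt n) M) :=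
        (isCompact_closedBall _ _).uniformContinuousOn_of_continuous hucont.continuousOn
      rw [Metric.uniformContinuousOn_iff] at hucomp
      obtain ⟨δ, hδ, hδimp⟩ := hucomp θ hθpos
      set δ' := min (δ / 2) (τs / 2) with hδ'
      have hδ'pos : 0 < δ' := lt_min (by linarith) (by linarith)
      have hδ'τ : δ' ≤ τs / 2 := min_le_right _ _
      have hnotin : τs - δ' ∉ T' := by
        intro hmem
        have := csInf_le hbdd hmem
        rw [← hτs] at this
        linarith
      have h1 : ∃ t' : ℝ, τs - δ' ≤ t' ∧ ∃ y : Pt n, ¬ u y ≤ u (y + t' • e) := by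
        by_contra hcon
        push_neg at hcon
        exact hnotin ⟨by linarith, fun t' ht' y => hcon t' ht' y⟩
      obtain ⟨t, htlb, y0, hy0⟩ := h1
      push_neg at hy0
      have htub : t < τs := by
        rcases lt_trichotomy t τs with h | h | h
        · exact h
        · exfalso; rw [h] at hy0; exact absurd (hstar y0) (not_le.mpr hy0)
        · exact absurd (hge t h y0) (not_le.mpr hy0)
      have ht0 : 0 < t := by linarith
      have hgcont : Continuous fun y : Pt n => u (y + t • e) - u y :=
        (hucont.comp (continuous_id.add continuous_const)).sub hucont
      obtain ⟨x0, hx0mem, hx0min⟩ := (isCompact_closedBall (0 : Pt n) R).exists_isMinOn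
        ⟨0, mem_closedBall_self hRpos.le⟩ hgcont.continuousOn
      set m := u (x0 + t • e) - u x0 with hm
      have hy0Ω : y0 ∈ Ω := by
        by_contra hcon
        exact absurd (hW t ht0 y0 fun hpair => hcon hpair.1) (not_le.mpr hy0)
      have hmneg : m < 0 := by
        have hball0 : y0 ∈ closedBall (0 : Pt n) R := ball_subset_closedBall (hΩR hy0Ω)
        have h2 := isMinOn_iff.mp hx0min y0 hball0
        rw [← hm] at h2
        linarith
      have hglobmin : ∀ y : Pt n, m ≤ u (y + t • e) - u y := by
        intro y
        by_cases hyb : y ∈ closedBall (0 : Pt n) R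
        · have h2 := isMinOn_iff.mp hx0min y hyb
          rw [← hm] at h2
          exact h2
        · have h2 : u y ≤ u (y + t • e) := hW t ht0 y fun hpair =>
            hyb (ball_subset_closedBall (hΩR hpair.1))
          linarith
      have hx0Ω : x0 ∈ Ω ∧ x0 + t • e ∈ Ω := by
        by_contra hcon
        have := hW t ht0 x0 hcon
        rw [hm] at hmneg
        linarith
      have hx0R : ‖x0‖ < R := mem_ball_zero_iff.mp (hΩR hx0Ω.1)
      have hclose : ∀ y : Pt n, ‖y‖ ≤ R + r + ‖zh‖ →
          |u (y + t • e) - u (y + τs • e)| < θ := by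
        intro y hy
        have hm1 : y + t • e ∈ closedBall (0 : Pt n) M := by
          rw [mem_closedBall_zero_iff]
          calc ‖y + t • e‖ ≤ ‖y‖ + ‖t • e‖ := norm_add_le _ _
            _ = ‖y‖ + |t| := by rw [hsmul]
            _ = ‖y‖ + t := by rw [abs_of_pos ht0]
            _ ≤ M := by rw [hM]; linarith
        have hm2 : y + τs • e ∈ closedBall (0 : Pt n) M := by
          rw [mem_closedBall_zero_iff]
          calc ‖y + τs • e‖ ≤ ‖y‖ + ‖τs • e‖ := norm_add_le _ _
            _ = ‖y‖ + |τs| := by rw [hsmul]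
            _ = ‖y‖ + τs := by rw [abs_of_pos hpos]
            _ ≤ M := by rw [hM]; linarith
        have hd : dist (y + t • e) (y + τs • e) < δ := by
          rw [dist_eq_norm]
          have heq2 : (y + t • e) - (y + τs • e) = (t - τs) • e := by
            rw [sub_smul]; abel
          rw [heq2, hsmul, abs_of_nonpos (by linarith)]
          have : δ' ≤ δ / 2 := min_le_left _ _
          linarith
        have := hδimp _ hm1 _ hm2 hd
        rwa [Real.dist_eq] at this
      have hmθ : -θ ≤ m := by
        have h1 := hclose x0 (by linarith [norm_nonneg zh])
        have h2 := hstar x0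
        have h3 := (abs_lt.mp h1).1
        rw [hm]
        linarith
      have hballg : ∀ y ∈ ball zh r, c / 2 ≤ u (y + t • e) - u y := by
        intro y hy
        have hyzh : dist y zh < r := mem_ball.mp hy
        have hyn : ‖y‖ ≤ R + r + ‖zh‖ := by
          have h4 : ‖y‖ ≤ ‖zh‖ + dist y zh := by
            calc ‖y‖ = ‖zh + (y - zh)‖ := by congr 1; abel
              _ ≤ ‖zh‖ + ‖y - zh‖ := norm_add_le _ _
              _ = ‖zh‖ + dist y zh := by rw [dist_eq_norm]
          linarith
        have h1 := hclose y hyn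
        have h2 : c < u (y + τs • e) - u y := hrsub hy
        have h3 := (abs_lt.mp h1).1
        have hθc : θ ≤ c / 2 := min_le_left _ _
        linarith
      have hdistb : ∀ y ∈ ball zh r, dist x0 y ≤ R0 := by
        intro y hy
        have hzhR : ‖zh‖ < R := mem_ball_zero_iff.mp (hΩR hzhΩ)
        have hyzh : dist y zh < r := mem_ball.mp hy
        have h4 : ‖y‖ ≤ ‖zh‖ + dist y zh := by
          calc ‖y‖ = ‖zh + (y - zh)‖ := by congr 1; abel
            _ ≤ ‖zh‖ + ‖y - zh‖ := norm_add_le _ _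
            _ = ‖zh‖ + dist y zh := by rw [dist_eq_norm]
        have h5 : dist x0 y ≤ ‖x0‖ + ‖y‖ := by
          calc dist x0 y = ‖x0 - y‖ := dist_eq_norm _ _
            _ ≤ ‖x0‖ + ‖y‖ := norm_sub_le _ _
        rw [hR0def]
        linarith
      have hkey := key_estimate n hn s hs.1 Cns hCns u huL.2 hucont (t • e) x0
        (f (u (x0 + t • e))) (f (u x0)) (heq _ hx0Ω.2) (heq _ hx0Ω.1) m (by rw [hm])
        hmneg.le hglobmin zh r (c / 2) R0 hr (by linarith) hR0pos hballg hdistb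
      have hkey' : f (u (x0 + t • e)) - f (u x0) ≤ -κ := by
        rw [hκ]; exact hkey
      have hfl : |f (u (x0 + t • e)) - f (u x0)| ≤ KR * |m| := by
        have h1 := hLip (u (x0 + t • e)) (u x0)
        rw [← hm] at h1
        exact h1
      have habs2 : |m| ≤ θ := by
        rw [abs_of_neg hmneg]
        linarith
      have hθκ : θ ≤ κ / (2 * KR) := min_le_right _ _
      clear_value m κ θ δ' KR R0 c τs
      have h3 : KR * |m| ≤ KR * (κ / (2 * KR)) :=
        mul_le_mul_of_nonneg_left (habs2.trans hθκ) hKR.le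
      have h4 := neg_abs_le (f (u (x0 + t • e)) - f (u x0))
      have h5 : KR * (κ / (2 * KR)) = κ / 2 := by
        field_simp
      have hXge : κ ≤ |f (u (x0 + t • e)) - f (u x0)| := by
        linarith only [hkey', h4]
      have hXle : |f (u (x0 + t • e)) - f (u x0)| ≤ κ / 2 := by
        linarith only [hfl, h3, h5]
      linarith only [hXge, hXle, hκpos]
  -- strict inequality
  by_contra hcon
  push_neg at hcon
  have heq0 : u (x + τ • e) - u x = 0 := by
    have := hglob τ hτ x
    linarith
  obtain ⟨zh, hzhΩ, hzhout⟩ := hmix τ hτ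
  have hc2 : 0 < u (zh + τ • e) - u zh := sub_pos.mpr (hout1 τ hτ zh hzhΩ hzhout)
  set c := (u (zh + τ • e) - u zh) / 2 with hcdef
  have hc : 0 < c := by rw [hcdef]; linarith
  have hopen : IsOpen {y : Pt n | c < u (y + τ • e) - u y} :=
    isOpen_lt continuous_const
      ((hucont.comp (continuous_id.add continuous_const)).sub hucont)
  have hzin : zh ∈ {y : Pt n | c < u (y + τ • e) - u y} := by
    rw [Set.mem_setOf_eq, hcdef]; linarith
  obtain ⟨r, hr, hrsub⟩ := Metric.isOpen_iff.mp hopen zh hzin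
  set R0 : ℝ := 2 * R + r with hR0def
  have hR0pos : 0 < R0 := by rw [hR0def]; linarith
  have hdistb : ∀ y ∈ ball zh r, dist x y ≤ R0 := by
    intro y hy
    have hzhR : ‖zh‖ < R := mem_ball_zero_iff.mp (hΩR hzhΩ)
    have hxR : ‖x‖ < R := mem_ball_zero_iff.mp (hΩR hxΩ)
    have hyzh : dist y zh < r := mem_ball.mp hy
    have h4 : ‖y‖ ≤ ‖zh‖ + dist y zh := by
      calc ‖y‖ = ‖zh + (y - zh)‖ := by congr 1; abel
        _ ≤ ‖zh‖ + ‖y - zh‖ := norm_add_le _ _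
        _ = ‖zh‖ + dist y zh := by rw [dist_eq_norm]
    have h5 : dist x y ≤ ‖x‖ + ‖y‖ := by
      calc dist x y = ‖x - y‖ := dist_eq_norm _ _
        _ ≤ ‖x‖ + ‖y‖ := norm_sub_le _ _
    rw [hR0def]
    linarith
  have hkey := key_estimate n hn s hs.1 Cns hCns u huL.2 hucont (τ • e) x
    (f (u (x + τ • e))) (f (u x)) (heq _ hxτΩ) (heq _ hxΩ) 0 heq0 le_rfl
    (fun y => by have := hglob τ hτ y; linarith) zh r c R0 hr hc hR0pos
    (fun y hy => (hrsub hy).le) hdistb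
  have hueq : u (x + τ • e) = u x := by linarith
  rw [hueq, sub_self] at hkey
  have hvol : 0 < (volume (ball zh r)).toReal :=
    ENNReal.toReal_pos (measure_ball_pos volume zh hr).ne' measure_ball_lt_top.ne
  have hpow : 0 < R0 ^ ((n : ℝ) + 2 * s) := Real.rpow_pos_of_pos hR0pos _
  have hfin : 0 < Cns * ((volume (ball zh r)).toReal / 2 * (c / R0 ^ ((n : ℝ) + 2 * s))) := by
    positivity
  linarith

end
end

section
/- Generalized average inequality: Let u ∈ L_{2s} ∩ C^{1,1}_loc(ℝ^n) and suppose x̄ ∈ ℝ^n is a global maximum point of u, i.e. u(x̄) ≥ u(y) for all y ∈ ℝ^n. Let C₀ > 0 be the constant determined by C₀ ∫_{ℝ^n \ B_1(0)} |y|^{−(n+2s)} dy = 1 (equivalently, C₀ ∫_{ℝ^n \ B_r(x̄)} r^{2s}/|x̄ − y|^{n+2s} dy = 1 for every r > 0). Then for every r > 0: (C₀/C_{n,s}) · r^{2s} · (-Δ)^s u(x̄) + C₀ ∫_{ℝ^n \ B_r(x̄)} (r^{2s}/|x̄ − y|^{n+2s}) u(y) dy ≥ u(x̄). -/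
open MeasureTheory Filter Metric Set

noncomputable section

/-- Indicator scaling identity. -/
lemma aux_indicator_scale (n : ℕ) (p : ℝ) (xb : Pt n) {r : ℝ} (hr : 0 < r) (y : Pt n) :
    ((ball xb r)ᶜ).indicator (fun y : Pt n => dist xb y ^ (-p)) y
      = r ^ (-p) *
        ((ball (0 : Pt n) 1)ᶜ).indicator (fun z : Pt n => ‖z‖ ^ (-p)) (r⁻¹ • (y - xb)) := by
  have hnorm : ‖r⁻¹ • (y - xb)‖ = r⁻¹ * ‖y - xb‖ := by
    rw [norm_smul, Real.norm_eq_abs, abs_of_pos (inv_pos.2 hr)]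
  have hdist : dist xb y = r * ‖r⁻¹ • (y - xb)‖ := by
    rw [hnorm, dist_comm, dist_eq_norm]
    field_simp
  have hmem : y ∈ (ball xb r)ᶜ ↔ (r⁻¹ • (y - xb)) ∈ (ball (0 : Pt n) 1)ᶜ := by
    simp only [mem_compl_iff, mem_ball, not_lt, mem_ball_zero_iff, dist_eq_norm, hnorm, sub_zero]
    rw [inv_mul_eq_div, le_div_iff₀ hr, one_mul]
  by_cases h : y ∈ (ball xb r)ᶜ
  · rw [indicator_of_mem h, indicator_of_mem (hmem.1 h), hdist,
      Real.mul_rpow hr.le (norm_nonneg _)]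
  · rw [indicator_of_notMem h, indicator_of_notMem (fun hc => h (hmem.2 hc)), mul_zero]

/-- Transfer of integrability from the unit ball complement. -/
lemma aux_scale_integrable (n : ℕ) (p : ℝ) (xb : Pt n) {r : ℝ} (hr : 0 < r)
    (h1 : IntegrableOn (fun z : Pt n => ‖z‖ ^ (-p)) (ball (0 : Pt n) 1)ᶜ) :
    IntegrableOn (fun y : Pt n => dist xb y ^ (-p)) (ball xb r)ᶜ := by
  rw [← integrable_indicator_iff measurableSet_ball.compl]
  have hF : Integrable (((ball (0 : Pt n) 1)ᶜ).indicator (fun z : Pt n => ‖z‖ ^ (-p))) :=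
    (integrable_indicator_iff measurableSet_ball.compl).2 h1
  have h2 : Integrable (fun w : Pt n =>
      ((ball (0 : Pt n) 1)ᶜ).indicator (fun z : Pt n => ‖z‖ ^ (-p)) (r⁻¹ • w)) :=
    (integrable_comp_smul_iff volume _ (inv_ne_zero hr.ne')).2 hF
  have h3 := (h2.comp_sub_right xb).const_mul (r ^ (-p))
  have h4 : ((ball xb r)ᶜ).indicator (fun y : Pt n => dist xb y ^ (-p))
      = fun y : Pt n => r ^ (-p) *
        ((ball (0 : Pt n) 1)ᶜ).indicator (fun z : Pt n => ‖z‖ ^ (-p)) (r⁻¹ • (y - xb)) :=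
    funext (aux_indicator_scale n p xb hr)
  rw [h4]
  exact h3

/-- Scaling identity for the integral. -/
lemma aux_scale_integral (n : ℕ) (p : ℝ) (xb : Pt n) {r : ℝ} (hr : 0 < r) :
    ∫ y in (ball xb r)ᶜ, dist xb y ^ (-p)
      = r ^ (-p) * r ^ (n : ℕ) * ∫ z in (ball (0 : Pt n) 1)ᶜ, ‖z‖ ^ (-p) := by
  calc ∫ y in (ball xb r)ᶜ, dist xb y ^ (-p)
      = ∫ y, ((ball xb r)ᶜ).indicator (fun y : Pt n => dist xb y ^ (-p)) y :=
        (integral_indicator measurableSet_ball.compl).symm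
    _ = ∫ y, r ^ (-p) *
          ((ball (0 : Pt n) 1)ᶜ).indicator (fun z : Pt n => ‖z‖ ^ (-p)) (r⁻¹ • (y - xb)) := by
        simp_rw [aux_indicator_scale n p xb hr]
    _ = r ^ (-p) * ∫ y,
          ((ball (0 : Pt n) 1)ᶜ).indicator (fun z : Pt n => ‖z‖ ^ (-p)) (r⁻¹ • (y - xb)) :=
        integral_const_mul _ _
    _ = r ^ (-p) * ∫ y,
          ((ball (0 : Pt n) 1)ᶜ).indicator (fun z : Pt n => ‖z‖ ^ (-p)) (r⁻¹ • y) := by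
        rw [integral_sub_right_eq_self (fun y : Pt n =>
          ((ball (0 : Pt n) 1)ᶜ).indicator (fun z : Pt n => ‖z‖ ^ (-p)) (r⁻¹ • y)) xb]
    _ = r ^ (-p) * (|((r⁻¹) ^ (Module.finrank ℝ (Pt n)))⁻¹| •
          ∫ y, ((ball (0 : Pt n) 1)ᶜ).indicator (fun z : Pt n => ‖z‖ ^ (-p)) y) := by
        rw [Measure.integral_comp_smul volume (fun y : Pt n =>
          ((ball (0 : Pt n) 1)ᶜ).indicator (fun z : Pt n => ‖z‖ ^ (-p)) y) r⁻¹]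
    _ = r ^ (-p) * r ^ (n : ℕ) * ∫ z in (ball (0 : Pt n) 1)ᶜ, ‖z‖ ^ (-p) := by
        rw [integral_indicator measurableSet_ball.compl, finrank_euclideanSpace_fin,
          inv_pow, inv_inv, abs_of_pos (pow_pos hr n), smul_eq_mul, mul_assoc]

/-- Integrability of `u y / dist xb y ^ p` outside a ball. -/
lemma aux_u_div_integrable (n : ℕ) (s : ℝ) (hs0 : 0 < s) (u : Pt n → ℝ)
    (huL : MemL2s n s u) (xb : Pt n) {ρ : ℝ} (hρ : 0 < ρ) :
    IntegrableOn (fun y : Pt n => u y / dist xb y ^ ((n : ℝ) + 2 * s)) (ball xb ρ)ᶜ := by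
  obtain ⟨huloc, huint⟩ := huL
  set p : ℝ := (n : ℝ) + 2 * s with hp_def
  have hp : 0 < p := by positivity
  set K : ℝ := ρ ^ (-p) + ((‖xb‖ + ρ) / ρ) ^ p with hK_def
  have hcont : Continuous (fun y : Pt n => dist xb y ^ p) :=
    (continuous_const.dist continuous_id).rpow_const (fun y => Or.inr hp.le)
  have hmeas : AEStronglyMeasurable (fun y : Pt n => u y / dist xb y ^ p)
      (volume.restrict (ball xb ρ)ᶜ) := by
    have h := (huloc.aestronglyMeasurable).mul (hcont.measurable.inv.aestronglyMeasurable)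
    exact (h.restrict (s := (ball xb ρ)ᶜ)).congr (ae_of_all _ fun y => by simp [div_eq_mul_inv])
  refine Integrable.mono' ((huint.const_mul K).restrict) hmeas ?_
  refine (ae_restrict_iff' measurableSet_ball.compl).2 (ae_of_all _ fun y hy => ?_)
  have hd : ρ ≤ dist xb y := by
    simpa [mem_ball, dist_comm, not_lt] using hy
  have hd0 : 0 < dist xb y := lt_of_lt_of_le hρ hd
  have hdp : 0 < dist xb y ^ p := Real.rpow_pos_of_pos hd0 p
  have hden : 0 < 1 + ‖y‖ ^ p := by positivity
  have hbig : 1 + ‖y‖ ^ p ≤ K * dist xb y ^ p := by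
    have hy1 : ‖y‖ ≤ ((‖xb‖ + ρ) / ρ) * dist xb y := by
      have ha : ‖y‖ ≤ ‖y - xb‖ + ‖xb‖ := by
        calc ‖y‖ = ‖(y - xb) + xb‖ := by rw [sub_add_cancel]
          _ ≤ ‖y - xb‖ + ‖xb‖ := norm_add_le _ _
      have hb : ‖y - xb‖ = dist xb y := by rw [dist_comm, dist_eq_norm]
      have hc : ‖xb‖ ≤ (‖xb‖ / ρ) * dist xb y := by
        have h := mul_le_mul_of_nonneg_left hd (div_nonneg (norm_nonneg xb) hρ.le)
        calc ‖xb‖ = (‖xb‖ / ρ) * ρ := by field_simp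
          _ ≤ (‖xb‖ / ρ) * dist xb y := h
      have hexp : (‖xb‖ + ρ) / ρ = ‖xb‖ / ρ + 1 := by field_simp
      rw [hexp]
      rw [hb] at ha
      nlinarith
    have h2 : ‖y‖ ^ p ≤ ((‖xb‖ + ρ) / ρ) ^ p * dist xb y ^ p := by
      have := Real.rpow_le_rpow (norm_nonneg y) hy1 hp.le
      rwa [Real.mul_rpow (by positivity) hd0.le] at this
    have h3 : (1 : ℝ) ≤ ρ ^ (-p) * dist xb y ^ p := by
      have h4 : ρ ^ p ≤ dist xb y ^ p := Real.rpow_le_rpow hρ.le hd hp.le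
      have h5 : (1 : ℝ) ≤ dist xb y ^ p / ρ ^ p :=
        (one_le_div (Real.rpow_pos_of_pos hρ p)).2 h4
      rw [Real.rpow_neg hρ.le]
      rw [div_eq_inv_mul] at h5
      exact h5
    rw [hK_def, add_mul]
    linarith
  have hnorm : ‖u y / dist xb y ^ p‖ = |u y| / dist xb y ^ p := by
    rw [Real.norm_eq_abs, abs_div, abs_of_pos hdp]
  rw [hnorm, mul_div_assoc']
  rw [div_le_div_iff₀ hdp hden]
  nlinarith [mul_le_mul_of_nonneg_left hbig (abs_nonneg (u y))]

/-- A generalized average inequality at a global maximum point. -/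
theorem generalized_average_inequality
    (n : ℕ) (hn : 0 < n) (s : ℝ) (hs : s ∈ Set.Ioo (0 : ℝ) 1) (Cns : ℝ) (hCns : 0 < Cns)
    (u : Pt n → ℝ) (huL : MemL2s n s u) (huC : C11loc n u Set.univ)
    (xb : Pt n) (hmax : ∀ y : Pt n, u y ≤ u xb)
    (C0 : ℝ) (hC0pos : 0 < C0)
    (hC0 : C0 * ∫ y in (ball (0 : Pt n) 1)ᶜ, ‖y‖ ^ (-((n : ℝ) + 2 * s)) = 1)
    (L : ℝ) (hL : HasFracLap n s Cns u xb L) :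
    ∀ r : ℝ, 0 < r →
      u xb ≤ (C0 / Cns) * r ^ (2 * s) * L +
        C0 * ∫ y in (ball xb r)ᶜ, (r ^ (2 * s) / dist xb y ^ ((n : ℝ) + 2 * s)) * u y := by
  intro r hr
  obtain ⟨hs0, hs1⟩ := hs
  set p : ℝ := (n : ℝ) + 2 * s with hp_def
  have hp : 0 < p := by positivity
  set I1 : ℝ := ∫ y in (ball (0 : Pt n) 1)ᶜ, ‖y‖ ^ (-p) with hI1_def
  have hI1ne : I1 ≠ 0 := by
    intro h
    rw [h, mul_zero] at hC0
    exact one_ne_zero hC0.symm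
  have hInt1 : IntegrableOn (fun z : Pt n => ‖z‖ ^ (-p)) (ball (0 : Pt n) 1)ᶜ := by
    by_contra h
    exact hI1ne (integral_undef h)
  -- integrability pieces
  have hIntd : ∀ ρ : ℝ, 0 < ρ →
      IntegrableOn (fun y : Pt n => dist xb y ^ (-p)) (ball xb ρ)ᶜ :=
    fun ρ hρ => aux_scale_integrable n p xb hρ hInt1
  have hIntu : ∀ ρ : ℝ, 0 < ρ →
      IntegrableOn (fun y : Pt n => u y / dist xb y ^ p) (ball xb ρ)ᶜ :=
    fun ρ hρ => aux_u_div_integrable n s hs0 u huL xb hρ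
  -- on the set, the constant part rewrites
  have hconst_eq : ∀ ρ : ℝ, 0 < ρ → ∀ y ∈ (ball xb ρ)ᶜ,
      u xb / dist xb y ^ p = u xb * dist xb y ^ (-p) := by
    intro ρ hρ y hy
    have hd : ρ ≤ dist xb y := by simpa [mem_ball, dist_comm, not_lt] using hy
    have hd0 : 0 < dist xb y := lt_of_lt_of_le hρ hd
    rw [Real.rpow_neg hd0.le, div_eq_mul_inv]
  have hIntc : ∀ ρ : ℝ, 0 < ρ →
      IntegrableOn (fun y : Pt n => u xb / dist xb y ^ p) (ball xb ρ)ᶜ := by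
    intro ρ hρ
    exact IntegrableOn.congr_fun ((hIntd ρ hρ).const_mul (u xb))
      (fun y hy => (hconst_eq ρ hρ y hy).symm) measurableSet_ball.compl
  have hIntg : ∀ ρ : ℝ, 0 < ρ →
      IntegrableOn (fun y : Pt n => (u xb - u y) / dist xb y ^ p) (ball xb ρ)ᶜ := by
    intro ρ hρ
    have : (fun y : Pt n => (u xb - u y) / dist xb y ^ p)
        = fun y : Pt n => u xb / dist xb y ^ p - u y / dist xb y ^ p := by
      funext y; rw [sub_div]
    rw [this]
    exact (hIntc ρ hρ).sub (hIntu ρ hρ)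
  -- nonnegativity of the integrand
  have hg0 : ∀ y : Pt n, 0 ≤ (u xb - u y) / dist xb y ^ p :=
    fun y => div_nonneg (sub_nonneg.2 (hmax y)) (Real.rpow_nonneg dist_nonneg p)
  -- the limit bound
  set Ir : ℝ := ∫ y in (ball xb r)ᶜ, (u xb - u y) / dist xb y ^ p with hIr_def
  have hLbound : Cns * Ir ≤ L := by
    unfold HasFracLap at hL
    refine ge_of_tendsto hL ?_
    filter_upwards [Ioo_mem_nhdsGT_of_mem (show (0:ℝ) ∈ Set.Ico 0 r from ⟨le_refl 0, hr⟩)]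
      with ε hε
    have hset : {y : Pt n | ε ≤ dist xb y} = (ball xb ε)ᶜ := by
      ext y; simp [mem_ball, dist_comm, not_lt]
    rw [hset]
    refine mul_le_mul_of_nonneg_left ?_ hCns.le
    refine setIntegral_mono_set (hIntg ε hε.1) (ae_of_all _ hg0) ?_
    exact HasSubset.Subset.eventuallyLE (compl_subset_compl.2 (ball_subset_ball hε.2.le))
  -- split Ir
  set A : ℝ := ∫ y in (ball xb r)ᶜ, dist xb y ^ (-p) with hA_def
  set B : ℝ := ∫ y in (ball xb r)ᶜ, u y / dist xb y ^ p with hB_def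
  have hIr_split : Ir = u xb * A - B := by
    rw [hIr_def]
    have : (fun y : Pt n => (u xb - u y) / dist xb y ^ p)
        = fun y : Pt n => u xb / dist xb y ^ p - u y / dist xb y ^ p := by
      funext y; rw [sub_div]
    rw [this, integral_sub (hIntc r hr) (hIntu r hr)]
    congr 1
    rw [setIntegral_congr_fun measurableSet_ball.compl (hconst_eq r hr), integral_const_mul]
  -- scaling: r^(2s) * A = I1
  have hr2s : (0 : ℝ) < r ^ (2 * s) := Real.rpow_pos_of_pos hr _
  have hrA : r ^ (2 * s) * A = I1 := by
    rw [hA_def, aux_scale_integral n p xb hr, ← hI1_def]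
    have hrpow : (r : ℝ) ^ (n : ℕ) = r ^ ((n : ℕ) : ℝ) := (Real.rpow_natCast r n).symm
    rw [hrpow, ← mul_assoc, ← mul_assoc, ← Real.rpow_add hr, ← Real.rpow_add hr]
    rw [hp_def]
    norm_num
  -- the target integral equals r^(2s) * B
  have hTB : (∫ y in (ball xb r)ᶜ, (r ^ (2 * s) / dist xb y ^ p) * u y) = r ^ (2 * s) * B := by
    rw [hB_def, ← integral_const_mul]
    congr 1
    funext y
    rw [div_mul_eq_mul_div, mul_div_assoc]
  rw [hTB]
  -- final arithmetic
  have hCnsne : Cns ≠ 0 := hCns.ne'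
  have h1 : Cns * (u xb * A - B) ≤ L := by rw [← hIr_split]; exact hLbound
  have h2 : C0 * I1 = 1 := hC0
  have key := mul_le_mul_of_nonneg_left h1
    (le_of_lt (by positivity : (0:ℝ) < C0 * r ^ (2 * s) * Cns⁻¹))
  have hCC : Cns⁻¹ * Cns = 1 := inv_mul_cancel₀ hCnsne
  have hlhs : C0 * r ^ (2 * s) * Cns⁻¹ * (Cns * (u xb * A - B))
      = u xb * (C0 * (r ^ (2 * s) * A)) - C0 * (r ^ (2 * s) * B) := by
    have heq : C0 * r ^ (2 * s) * Cns⁻¹ * (Cns * (u xb * A - B))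
        = (Cns⁻¹ * Cns) * (u xb * (C0 * (r ^ (2 * s) * A)) - C0 * (r ^ (2 * s) * B)) := by ring
    rw [heq, hCC, one_mul]
  rw [hlhs, hrA, h2, mul_one] at key
  have : C0 / Cns * r ^ (2 * s) * L = C0 * r ^ (2 * s) * Cns⁻¹ * L := by
    rw [div_eq_mul_inv]; ring
  rw [this]
  linarith
end
end

section
/- Sub-average inequality for s-subharmonic functions at a maximum point: Let u ∈ L_{2s} ∩ C^{1,1}_loc(ℝ^n), suppose x̄ ∈ ℝ^n is a global maximum point of u (u(x̄) ≥ u(y) for all y ∈ ℝ^n), and suppose (-Δ)^s u(x̄) ≤ 0. Let C₀ > 0 be the constant determined by C₀ ∫_{ℝ^n \ B_1(0)} |y|^{−(n+2s)} dy = 1. Then for every r > 0: u(x̄) ≤ C₀ ∫_{ℝ^n \ B_r(x̄)} (r^{2s}/|x̄ − y|^{n+2s}) u(y) dy. -/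
open MeasureTheory Filter Metric Set

open Pointwise

noncomputable section

/-- Continuity of the Riesz-type kernel away from the singularity. -/
lemma contOn_rpow (n : ℕ) {ε α : ℝ} (hε : 0 < ε) (c : Pt n) :
    ContinuousOn (fun y : Pt n => dist c y ^ (-α)) {y | ε ≤ dist c y} := by
  intro y hy
  have : ContinuousAt (fun y : Pt n => dist c y ^ (-α)) y := by
    have h1 : ContinuousAt (fun y : Pt n => dist c y) y := (continuous_dist.comp
      (continuous_const.prodMk continuous_id)).continuousAt
    exact (Real.continuousAt_rpow_const _ _ (Or.inl (by
      have := hy; simp only [mem_setOf_eq] at this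
      exact ne_of_gt (lt_of_lt_of_le hε this)))).comp h1
  exact this.continuousWithinAt

/-- Integrability of `‖y‖^{-α}` outside a ball, for `α > n`. -/
lemma intOn_norm_rpow (n : ℕ) {ε : ℝ} (hε : 0 < ε) {α : ℝ} (hα : (n:ℝ) < α) :
    IntegrableOn (fun y : Pt n => ‖y‖ ^ (-α)) (ball (0:Pt n) ε)ᶜ volume := by
  have hα0 : (0:ℝ) < α := lt_of_le_of_lt (Nat.cast_nonneg n) hα
  have h1 : Integrable (fun y : Pt n => (1+‖y‖) ^ (-α)) volume :=
    integrable_one_add_norm (by simpa using hα)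
  have h2 := ((h1.const_mul ((1+ε⁻¹)^α)).restrict (s := (ball (0:Pt n) ε)ᶜ))
  refine h2.mono' ?_ ?_
  · have hset : (ball (0:Pt n) ε)ᶜ = {y : Pt n | ε ≤ dist (0:Pt n) y} := by
      ext y; simp [dist_comm, le_of_lt]
    rw [hset]
    have := ContinuousOn.aestronglyMeasurable (μ := volume)
      (contOn_rpow n hε (0:Pt n) (α := α))
      (show MeasurableSet {y : Pt n | ε ≤ dist (0:Pt n) y} from
        isClosed_le continuous_const (continuous_const.dist continuous_id) |>.measurableSet)
    simpa [dist_zero_left, dist_comm] using this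
  · refine (ae_restrict_iff' measurableSet_ball.compl).2 (Filter.Eventually.of_forall ?_)
    intro y hy
    simp only [mem_compl_iff, mem_ball, dist_zero_right, not_lt] at hy
    have hy0 : 0 < ‖y‖ := lt_of_lt_of_le hε hy
    rw [Real.norm_eq_abs, abs_of_nonneg (Real.rpow_nonneg (norm_nonneg _) _)]
    have key : (‖y‖ * (1+ε⁻¹)) ^ (-α) ≤ (1+‖y‖) ^ (-α) := by
      apply Real.rpow_le_rpow_of_nonpos (by positivity) ?_ (by linarith)
      have h4 : 1 ≤ ‖y‖ * ε⁻¹ := by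
        rw [← div_eq_mul_inv]; exact (one_le_div hε).2 hy
      nlinarith [norm_nonneg y]
    rw [Real.mul_rpow (norm_nonneg _) (by positivity),
      show (1+ε⁻¹)^(-α) = ((1+ε⁻¹)^α)⁻¹ from Real.rpow_neg (by positivity) α] at key
    have h3 : (0:ℝ) < (1+ε⁻¹) ^ α := by positivity
    calc ‖y‖ ^ (-α) = (1+ε⁻¹)^α * (‖y‖^(-α) * ((1+ε⁻¹)^α)⁻¹) := by
          field_simp
    _ ≤ (1+ε⁻¹)^α * (1+‖y‖)^(-α) := mul_le_mul_of_nonneg_left key (by positivity)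

/-- Elementary bound `1 + b^α ≤ C(ε,c) d^α` when `ε ≤ d` and `b ≤ c + d`. -/
lemma one_add_rpow_bound {α ε d c b : ℝ} (hα : 0 < α) (hε : 0 < ε) (hd : ε ≤ d)
    (hc : 0 ≤ c) (hb : 0 ≤ b) (hbcd : b ≤ c + d) :
    1 + b ^ α ≤ (ε⁻¹ ^ α + (ε⁻¹ * c + 1) ^ α) * d ^ α := by
  have hd0 : 0 < d := lt_of_lt_of_le hε hd
  have h1 : 1 ≤ ε⁻¹ * d := by
    rw [← inv_mul_cancel₀ hε.ne']
    exact mul_le_mul_of_nonneg_left hd (inv_nonneg.2 hε.le)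
  have h2 : 1 ≤ (ε⁻¹ * d) ^ α := by
    simpa using Real.rpow_le_rpow zero_le_one h1 hα.le
  have h3 : b ^ α ≤ ((ε⁻¹ * c + 1) * d) ^ α := by
    apply Real.rpow_le_rpow hb ?_ hα.le
    nlinarith
  rw [Real.mul_rpow (by positivity) hd0.le] at h2
  rw [Real.mul_rpow (by positivity) hd0.le] at h3
  nlinarith [Real.rpow_nonneg hd0.le α, Real.rpow_nonneg (by positivity : (0:ℝ) ≤ ε⁻¹) α]

/-- Sub-average inequality for `s`-subharmonic functions at a global maximum point. -/
theorem subaverage_inequality_subharmonic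
    (n : ℕ) (hn : 0 < n) (s : ℝ) (hs : s ∈ Set.Ioo (0 : ℝ) 1) (Cns : ℝ) (hCns : 0 < Cns)
    (u : Pt n → ℝ) (huL : MemL2s n s u) (huC : C11loc n u Set.univ)
    (xb : Pt n) (hmax : ∀ y : Pt n, u y ≤ u xb)
    (L : ℝ) (hL : HasFracLap n s Cns u xb L) (hLneg : L ≤ 0)
    (C0 : ℝ) (hC0pos : 0 < C0)
    (hC0 : C0 * ∫ y in (ball (0 : Pt n) 1)ᶜ, ‖y‖ ^ (-((n : ℝ) + 2 * s)) = 1) :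
    ∀ r : ℝ, 0 < r →
      u xb ≤ C0 * ∫ y in (ball xb r)ᶜ, (r ^ (2 * s) / dist xb y ^ ((n : ℝ) + 2 * s)) * u y := by
  intro r hr
  obtain ⟨huLI, huInt⟩ := huL
  rw [HasFracLap] at hL
  set α : ℝ := (n:ℝ) + 2*s with hα_def
  have hα0 : (0:ℝ) < α := by have := hs.1; positivity
  have hnα : (n:ℝ) < α := by have := hs.1; simp only [hα_def]; linarith
  set S : ℝ → Set (Pt n) := fun ε => {y : Pt n | ε ≤ dist xb y} with hS_def
  have hSmeas : ∀ ε : ℝ, MeasurableSet (S ε) := fun ε =>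
    (isClosed_le continuous_const (continuous_const.dist continuous_id)).measurableSet
  have hdm : ∀ (y : Pt n) (v : ℝ), v / dist xb y ^ α = v * dist xb y ^ (-α) := by
    intro y v; rw [Real.rpow_neg dist_nonneg, div_eq_mul_inv]
  -- integrability of the kernel on S ε
  have hI1 : ∀ ε : ℝ, 0 < ε → IntegrableOn (fun y => dist xb y ^ (-α)) (S ε) volume := by
    intro ε hε
    have hmp := Measure.measurePreserving_sub_left (volume : Measure (Pt n)) xb
    have hemb : MeasurableEmbedding (fun t : Pt n => xb - t) :=
      (MeasurableEquiv.subLeft xb).measurableEmbedding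
    have hpre : (fun t : Pt n => xb - t) ⁻¹' ((ball (0:Pt n) ε)ᶜ) = S ε := by
      ext y; simp [hS_def, mem_ball_zero_iff, not_lt, dist_eq_norm]
    have := (hmp.integrableOn_comp_preimage hemb
      (f := fun y : Pt n => ‖y‖ ^ (-α)) (s := (ball (0:Pt n) ε)ᶜ)).2
      (intOn_norm_rpow n hε hnα)
    rw [hpre] at this
    have heq : ∀ y : Pt n, ‖xb - y‖ ^ (-α) = dist xb y ^ (-α) := by
      intro y; rw [dist_eq_norm]
    simpa [heq, Function.comp_def] using this
  -- integrability of u y * kernel on S ε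
  have hI2 : ∀ ε : ℝ, 0 < ε →
      IntegrableOn (fun y => u y * dist xb y ^ (-α)) (S ε) volume := by
    intro ε hε
    set C : ℝ := ε⁻¹ ^ α + (ε⁻¹ * ‖xb‖ + 1) ^ α with hC_def
    have hCpos : 0 < C := by positivity
    have hbig := ((huInt.const_mul C).restrict (s := S ε))
    refine hbig.mono' ?_ ?_
    · exact (huLI.aestronglyMeasurable.restrict).mul
        ((contOn_rpow n hε xb).aestronglyMeasurable (hSmeas ε))
    · refine (ae_restrict_iff' (hSmeas ε)).2 (Filter.Eventually.of_forall ?_)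
      intro y hy
      have hd : ε ≤ dist xb y := hy
      have hd0 : 0 < dist xb y := lt_of_lt_of_le hε hd
      have hb : ‖y‖ ≤ ‖xb‖ + dist xb y := by
        have := norm_sub_norm_le y xb
        rw [norm_sub_rev, ← dist_eq_norm] at this
        linarith
      have key : 1 + ‖y‖ ^ α ≤ C * dist xb y ^ α :=
        one_add_rpow_bound hα0 hε hd (norm_nonneg _) (norm_nonneg _) hb
      have h1p : (0:ℝ) < 1 + ‖y‖ ^ α := by positivity
      have hdp : (0:ℝ) < dist xb y ^ α := Real.rpow_pos_of_pos hd0 α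
      rw [norm_mul, Real.norm_eq_abs (dist xb y ^ (-α)),
        abs_of_nonneg (Real.rpow_nonneg dist_nonneg _), Real.rpow_neg dist_nonneg,
        ← div_eq_mul_inv]
      rw [div_le_iff₀ hdp]
      calc |u y| = (|u y| / (1 + ‖y‖ ^ α)) * (1 + ‖y‖ ^ α) := by field_simp
      _ ≤ (|u y| / (1 + ‖y‖ ^ α)) * (C * dist xb y ^ α) :=
            mul_le_mul_of_nonneg_left key (by positivity)
      _ = C * (|u y| / (1 + ‖y‖ ^ α)) * dist xb y ^ α := by ring
  -- the full integrand
  have hgeq : (fun y : Pt n => (u xb - u y) / dist xb y ^ α)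
      = fun y => u xb * dist xb y ^ (-α) - u y * dist xb y ^ (-α) := by
    funext y; rw [hdm]; ring
  have hgint : ∀ ε : ℝ, 0 < ε →
      IntegrableOn (fun y => (u xb - u y) / dist xb y ^ α) (S ε) volume := by
    intro ε hε
    rw [hgeq]
    exact ((hI1 ε hε).const_mul (u xb)).sub (hI2 ε hε)
  have hg0 : ∀ y : Pt n, 0 ≤ (u xb - u y) / dist xb y ^ α := fun y =>
    div_nonneg (sub_nonneg.2 (hmax y)) (Real.rpow_nonneg dist_nonneg _)
  set F : ℝ → ℝ := fun ε => ∫ y in S ε, (u xb - u y) / dist xb y ^ α with hF_def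
  have hFr_nonneg : 0 ≤ F r := setIntegral_nonneg (hSmeas r) (fun y _ => hg0 y)
  have hFr_le : Cns * F r ≤ L := by
    refine ge_of_tendsto hL ?_
    filter_upwards [Ioc_mem_nhdsGT_of_mem
      (show (0:ℝ) ∈ Ico (0:ℝ) r from ⟨le_refl 0, hr⟩)] with ε hε
    show Cns * F r ≤ Cns * F ε
    refine mul_le_mul_of_nonneg_left ?_ hCns.le
    refine setIntegral_mono_set (hgint ε hε.1) (Filter.Eventually.of_forall fun y => hg0 y) ?_
    exact HasSubset.Subset.eventuallyLE (fun y hy => le_trans hε.2 hy)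
  have hFr0 : F r = 0 := le_antisymm (by nlinarith) hFr_nonneg
  -- split the integral
  have hsplit : F r = u xb * (∫ y in S r, dist xb y ^ (-α))
      - ∫ y in S r, u y * dist xb y ^ (-α) := by
    show (∫ y in S r, (u xb - u y) / dist xb y ^ α) = _
    rw [hgeq, integral_sub ((hI1 r hr).const_mul (u xb)) (hI2 r hr), integral_const_mul _ _]
  -- translation
  have htrans : (∫ y in S r, dist xb y ^ (-α)) = ∫ y in (ball (0:Pt n) r)ᶜ, ‖y‖ ^ (-α) := by
    have hmp := Measure.measurePreserving_sub_left (volume : Measure (Pt n)) xb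
    have hemb : MeasurableEmbedding (fun t : Pt n => xb - t) :=
      (MeasurableEquiv.subLeft xb).measurableEmbedding
    have hpre : (fun t : Pt n => xb - t) ⁻¹' ((ball (0:Pt n) r)ᶜ) = S r := by
      ext y; simp [hS_def, mem_ball_zero_iff, not_lt, dist_eq_norm]
    have h := hmp.setIntegral_preimage_emb hemb (fun y : Pt n => ‖y‖ ^ (-α))
      ((ball (0:Pt n) r)ᶜ)
    rw [hpre] at h
    rw [← h]
    simp only [dist_eq_norm]
  -- scaling
  set I1 : ℝ := ∫ y in (ball (0:Pt n) 1)ᶜ, ‖y‖ ^ (-α) with hI1_def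
  have hscale : (∫ y in (ball (0:Pt n) r)ᶜ, ‖y‖ ^ (-α)) = r ^ ((n:ℝ) - α) * I1 := by
    have h := Measure.setIntegral_comp_smul_of_pos (volume : Measure (Pt n))
      (fun y : Pt n => ‖y‖ ^ (-α)) ((ball (0:Pt n) 1)ᶜ) hr
    have hsmul : r • ((ball (0:Pt n) 1)ᶜ) = (ball (0:Pt n) r)ᶜ := by
      ext x
      rw [Set.mem_smul_set_iff_inv_smul_mem₀ hr.ne']
      simp only [mem_compl_iff, mem_ball_zero_iff, not_lt, norm_smul, norm_inv,
        Real.norm_eq_abs, abs_of_pos hr]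
      rw [le_inv_mul_iff₀ hr, mul_one]
    have hl : ∀ x : Pt n, ‖r • x‖ ^ (-α) = r^(-α) * ‖x‖^(-α) := by
      intro x
      rw [norm_smul, Real.norm_eq_abs, abs_of_pos hr, Real.mul_rpow hr.le (norm_nonneg _)]
    simp only [hl] at h
    rw [integral_const_mul _ _, hsmul, finrank_euclideanSpace_fin, smul_eq_mul] at h
    have hrn : (0:ℝ) < r ^ n := by positivity
    have : (∫ y in (ball (0:Pt n) r)ᶜ, ‖y‖ ^ (-α)) = r ^ n * (r ^ (-α) * I1) := by
      rw [hI1_def]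
      field_simp at h
      linarith
    rw [this, ← Real.rpow_natCast r n, ← mul_assoc, ← Real.rpow_add hr]
    congr 1
  -- conclude
  have hB : (∫ y in S r, u y * dist xb y ^ (-α)) = u xb * (r ^ ((n:ℝ) - α) * I1) := by
    have h := hFr0
    rw [hsplit, htrans, hscale] at h
    linarith
  have hset : (ball xb r)ᶜ = S r := by
    ext y; simp [hS_def, mem_ball, dist_comm, not_lt]
  have hrw : ∀ y : Pt n, (r ^ (2*s) / dist xb y ^ α) * u y
      = r^(2*s) * (u y * dist xb y ^ (-α)) := by
    intro y; rw [hdm]; ring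
  rw [hset]
  simp only [hrw]
  rw [integral_const_mul _ _, hB]
  have hI1v : I1 = C0⁻¹ := eq_inv_of_mul_eq_one_left (by linarith [hC0])
  have h2s : (n:ℝ) - α = -(2*s) := by rw [hα_def]; ring
  have hr2s : (0:ℝ) < r ^ (2*s) := Real.rpow_pos_of_pos hr _
  rw [h2s, hI1v, Real.rpow_neg hr.le]
  apply le_of_eq
  field_simp
end
end

section
/- Normalization of the exterior Poisson kernel: For every r > 0, B(n,s) ∫_{{x ∈ ℝ^n : |x| > r}} r^{2s} / ((|x|² − r²)^s |x|^n) dx = 1, where B(n,s) = Γ(n/2) sin(πs) / π^{(n/2)+1}. -/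
open MeasureTheory Filter Metric Set

noncomputable section

/-- The constant `B(n,s) = Γ(n/2) sin(πs) / π^{n/2+1}` of the exterior Poisson kernel. -/
def Bns (n : ℕ) (s : ℝ) : ℝ :=
  Real.Gamma ((n : ℝ) / 2) * Real.sin (Real.pi * s) / Real.pi ^ ((n : ℝ) / 2 + 1)

lemma beta_eval {s : ℝ} (h0 : 0 < s) (h1 : s < 1) :
    ∫ x in Ioo (0:ℝ) 1, x ^ (s - 1) * (1 - x) ^ (-s) = Real.pi / Real.sin (Real.pi * s) := by
  have hB : Complex.betaIntegral s (1 - s) = ((Real.pi / Real.sin (Real.pi * s) : ℝ) : ℂ) := by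
    have h2 := Complex.Gamma_mul_Gamma_eq_betaIntegral
      (s := (s:ℂ)) (t := 1 - s) (by simpa using h0) (by simp [Complex.sub_re]; linarith)
    rw [show (s:ℂ) + (1 - s) = 1 by ring, Complex.Gamma_one, one_mul] at h2
    rw [← h2, Complex.Gamma_mul_Gamma_one_sub]
    push_cast [Complex.ofReal_sin]
    ring
  have hI : Complex.betaIntegral s (1-s)
      = ((∫ x in (0:ℝ)..1, x ^ (s-1) * (1-x) ^ (-s) : ℝ) : ℂ) := by
    rw [Complex.betaIntegral, ← intervalIntegral.integral_ofReal]
    apply intervalIntegral.integral_congr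
    intro x hx
    rw [Set.uIcc_of_le zero_le_one] at hx
    simp only []
    rw [Complex.ofReal_mul, Complex.ofReal_cpow hx.1, Complex.ofReal_cpow (by linarith [hx.2])]
    push_cast
    ring_nf
  rw [hI] at hB
  have := Complex.ofReal_inj.mp hB
  rw [← this, intervalIntegral.integral_of_le zero_le_one,
    MeasureTheory.integral_Ioc_eq_integral_Ioo]

lemma radial_eval {r s : ℝ} (hr : 0 < r) (h0 : 0 < s) (h1 : s < 1)
    (hbeta : ∫ x in Ioo (0:ℝ) 1, x ^ (s - 1) * (1 - x) ^ (-s) = Real.pi / Real.sin (Real.pi * s)) :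
    ∫ y in Ioi r, ((y ^ 2 - r ^ 2) ^ (-s)) / y
      = (r ^ (2:ℕ)) ^ (-s) * (Real.pi / (2 * Real.sin (Real.pi * s))) := by
  set f : ℝ → ℝ := fun x => r / Real.sqrt x with hf
  set f' : ℝ → ℝ := fun x => r * (-(1 / (2 * Real.sqrt x)) / Real.sqrt x ^ 2) with hf'
  have himg : f '' Ioo 0 1 = Ioi r := by
    ext y
    simp only [mem_image, mem_Ioi, mem_Ioo]
    constructor
    · rintro ⟨x, ⟨hx0, hx1⟩, rfl⟩
      have hsx : 0 < Real.sqrt x := Real.sqrt_pos.2 hx0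
      have hsx1 : Real.sqrt x < 1 := by
        nlinarith [Real.sq_sqrt hx0.le, hsx]
      rw [hf, lt_div_iff₀ hsx]
      nlinarith
    · intro hy
      have hy0 : 0 < y := hr.trans hy
      refine ⟨(r / y) ^ 2, ⟨by positivity, ?_⟩, ?_⟩
      · have : r / y < 1 := (div_lt_one hy0).2 hy
        nlinarith [div_pos hr hy0]
      · rw [hf]
        simp only
        rw [Real.sqrt_sq (by positivity)]
        field_simp
  have hderiv : ∀ x ∈ Ioo (0:ℝ) 1, HasDerivWithinAt f (f' x) (Ioo 0 1) x := by
    intro x hx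
    have hx0 : (0:ℝ) < x := hx.1
    have : HasDerivAt f (f' x) x := by
      have h := (Real.hasDerivAt_sqrt hx0.ne').inv (Real.sqrt_pos.2 hx0).ne'
      have := h.const_mul r
      simpa [hf, hf', div_eq_mul_inv, neg_div] using this
    exact this.hasDerivWithinAt
  have hinj : InjOn f (Ioo 0 1) := by
    intro a ha b hb hab
    have ha0 : 0 < Real.sqrt a := Real.sqrt_pos.2 ha.1
    have hb0 : 0 < Real.sqrt b := Real.sqrt_pos.2 hb.1
    have : Real.sqrt a = Real.sqrt b := by
      simp only [hf] at hab
      rw [div_eq_div_iff ha0.ne' hb0.ne', mul_eq_mul_left_iff] at hab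
      rcases hab with h | h
      · exact h.symm
      · exact absurd h hr.ne'
    have := congrArg (fun t => t ^ 2) this
    simpa [Real.sq_sqrt ha.1.le, Real.sq_sqrt hb.1.le] using this
  have hchg := integral_image_eq_integral_abs_deriv_smul measurableSet_Ioo hderiv hinj
      (fun y => ((y ^ 2 - r ^ 2) ^ (-s)) / y)
  rw [← himg, hchg]
  have hpt : ∀ x ∈ Ioo (0:ℝ) 1,
      |f' x| • (((f x) ^ 2 - r ^ 2) ^ (-s) / f x)
        = ((r ^ (2:ℕ)) ^ (-s) / 2) * (x ^ (s-1) * (1-x) ^ (-s)) := by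
    intro x hx
    obtain ⟨hx0, hx1⟩ := hx
    have hsx : 0 < Real.sqrt x := Real.sqrt_pos.2 hx0
    have hsq : Real.sqrt x ^ 2 = x := Real.sq_sqrt hx0.le
    have hfx2 : (f x) ^ 2 - r ^ 2 = r ^ 2 * (1 - x) / x := by
      rw [hf]; simp only
      rw [div_pow, hsq]
      field_simp
    have hfeq : f' x = -(r / (2 * x * Real.sqrt x)) := by
      rw [hf']; simp only
      rw [hsq]
      field_simp
    have habs : |f' x| = r / (2 * x * Real.sqrt x) := by
      rw [hfeq, abs_neg, abs_of_pos (by positivity)]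
    have hkey : (r ^ 2 * (1 - x) / x) ^ (-s)
        = (r ^ (2:ℕ)) ^ (-s) * (1 - x) ^ (-s) * x ^ s := by
      rw [Real.div_rpow (by nlinarith) hx0.le,
        Real.mul_rpow (by positivity) (by linarith), Real.rpow_neg hx0.le,
        div_eq_mul_inv, inv_inv]
    rw [smul_eq_mul, hfx2, habs, hkey, hf]
    simp only
    have hxs : x ^ (s - 1) = x ^ s / x := by
      rw [Real.rpow_sub hx0, Real.rpow_one]
    rw [hxs]
    have h1x : (0:ℝ) < Real.sqrt x := hsx
    field_simp
  rw [setIntegral_congr_fun measurableSet_Ioo hpt, integral_const_mul, hbeta]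
  ring

/-- Normalization of the exterior Poisson kernel. -/
theorem exterior_poisson_kernel_normalization
    (n : ℕ) (hn : 0 < n) (s : ℝ) (hs : s ∈ Set.Ioo (0 : ℝ) 1) :
    ∀ r : ℝ, 0 < r →
      Bns n s * ∫ x in {x : Pt n | r < ‖x‖},
        r ^ (2 * s) / ((‖x‖ ^ 2 - r ^ 2) ^ s * ‖x‖ ^ (n : ℕ)) = 1 := by
  obtain ⟨hs0, hs1⟩ := hs
  intro r hr
  haveI : Nonempty (Fin n) := ⟨⟨0, hn⟩⟩
  have hπ := Real.pi_pos
  have hsin : 0 < Real.sin (Real.pi * s) :=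
    Real.sin_pos_of_pos_of_lt_pi (by positivity) (by nlinarith)
  set h : ℝ → ℝ := fun y => r ^ (2 * s) / ((y ^ 2 - r ^ 2) ^ s * y ^ (n:ℕ)) with hh
  set g : ℝ → ℝ := fun y => Set.indicator (Ioi r) h y with hg
  have hmeas : MeasurableSet {x : Pt n | r < ‖x‖} :=
    measurableSet_lt measurable_const measurable_norm
  have h1 : (∫ x in {x : Pt n | r < ‖x‖},
      r ^ (2 * s) / ((‖x‖ ^ 2 - r ^ 2) ^ s * ‖x‖ ^ (n:ℕ))) = ∫ x : Pt n, g ‖x‖ := by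
    rw [← integral_indicator hmeas]
    apply integral_congr_ae
    apply Filter.Eventually.of_forall
    intro x
    by_cases hx : r < ‖x‖
    · simp [hg, hh, Set.indicator_apply, Set.mem_setOf_eq, Set.mem_Ioi, hx]
    · simp [hg, Set.indicator_apply, Set.mem_setOf_eq, Set.mem_Ioi, hx]
  rw [h1, integral_fun_norm_addHaar volume g]
  have hdim : Module.finrank ℝ (Pt n) = n := finrank_euclideanSpace_fin
  rw [hdim]
  -- inner radial integral
  have h2 : (∫ y in Ioi (0:ℝ), y ^ (n - 1) • g y)
      = ∫ y in Ioi r, y ^ (n - 1) * h y := by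
    have : (fun y : ℝ => y ^ (n-1) • g y)
        = Set.indicator (Ioi r) (fun y => y ^ (n-1) * h y) := by
      funext y
      by_cases hy : y ∈ Ioi r
      · simp [hg, Set.indicator_of_mem, hy]
      · simp [hg, Set.indicator_of_notMem, hy]
    rw [this, integral_indicator measurableSet_Ioi, Measure.restrict_restrict measurableSet_Ioi]
    congr 1
    rw [Set.inter_eq_left.2 (Ioi_subset_Ioi hr.le)]
  rw [h2]
  have h3 : (∫ y in Ioi r, y ^ (n - 1) * h y)
      = ∫ y in Ioi r, r ^ (2 * s) * (((y ^ 2 - r ^ 2) ^ (-s)) / y) := by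
    apply setIntegral_congr_fun measurableSet_Ioi
    intro y hy
    have hy0 : 0 < y := hr.trans hy
    have hyr : 0 < y ^ 2 - r ^ 2 := by nlinarith [hy.out]
    have hpow : y ^ (n:ℕ) = y ^ (n-1) * y := by
      conv_lhs => rw [show (n:ℕ) = (n-1)+1 from by omega]
      rw [pow_succ]
    rw [hh]
    simp only
    rw [Real.rpow_neg hyr.le, hpow]
    have hs' : (y ^ 2 - r ^ 2) ^ s ≠ 0 := by positivity
    field_simp
  rw [h3, integral_const_mul, radial_eval hr hs0 hs1 (beta_eval hs0 hs1)]
  have hr2 : r ^ (2*s) * ((r ^ (2:ℕ)) ^ (-s)) = 1 := by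
    rw [← Real.rpow_natCast r 2, ← Real.rpow_mul hr.le, ← Real.rpow_add hr]
    norm_num
  -- volume of unit ball
  have hV : (volume (ball (0 : Pt n) 1)).toReal
      = Real.sqrt Real.pi ^ n / Real.Gamma (n / 2 + 1) := by
    rw [EuclideanSpace.volume_ball]
    simp [Fintype.card_fin, ENNReal.toReal_ofReal, Real.Gamma_pos_of_pos,
      le_of_lt (div_pos (pow_pos (Real.sqrt_pos.2 hπ) n)
        (Real.Gamma_pos_of_pos (by positivity : (0:ℝ) < (n:ℝ)/2 + 1)))]
  rw [measureReal_def, hV]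
  have hsqrtpi : Real.sqrt Real.pi ^ n = Real.pi ^ ((n:ℝ)/2) := by
    rw [Real.sqrt_eq_rpow, ← Real.rpow_natCast (Real.pi ^ ((1:ℝ)/2)) n,
      ← Real.rpow_mul hπ.le]
    ring_nf
  have hGam : Real.Gamma ((n:ℝ) / 2 + 1) = ((n:ℝ)/2) * Real.Gamma ((n:ℝ)/2) := by
    rw [Real.Gamma_add_one (by positivity : ((n:ℝ)/2) ≠ 0)]
  have hpow1 : Real.pi ^ ((n:ℝ)/2 + 1) = Real.pi ^ ((n:ℝ)/2) * Real.pi := by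
    rw [Real.rpow_add hπ, Real.rpow_one]
  have hΓpos : 0 < Real.Gamma ((n:ℝ)/2) := Real.Gamma_pos_of_pos (by positivity)
  have hppos : 0 < Real.pi ^ ((n:ℝ)/2) := Real.rpow_pos_of_pos hπ _
  have hn' : (0:ℝ) < (n:ℝ) := by exact_mod_cast hn
  rw [nsmul_eq_mul, smul_eq_mul, Bns]
  rw [show r ^ (2*s) * ((r ^ (2:ℕ)) ^ (-s) * (Real.pi / (2 * Real.sin (Real.pi * s))))
      = Real.pi / (2 * Real.sin (Real.pi * s)) from by rw [← mul_assoc, hr2, one_mul]]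
  rw [hsqrtpi, hGam, hpow1]
  field_simp
end
end

section
/- Key estimate at a negative minimum: Let D ⊂ ℝ^n be an open set and let w ∈ L_{2s} satisfy w(x) ≥ 0 for all x ∈ ℝ^n \ D. Suppose w attains a global minimum at a point x₀ ∈ D with w(x₀) < 0 and that (-Δ)^s w(x₀) exists. Then (-Δ)^s w(x₀) ≤ C_{n,s} · w(x₀) · ∫_{ℝ^n \ D} |x₀ − y|^{−(n+2s)} dy. -/
/-!
Since `x₀` is a global minimum, the integrand `(w x₀ - w y) / |x₀ - y| ^ (n + 2s)` is nonpositive,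
so once `ε` is below the distance from `x₀` to `Dᶜ`, the truncated integral is at most its part
over `Dᶜ`. There `w y ≥ 0`, so the numerator is at most `w x₀`; letting `ε → 0` gives the bound.
The truncated integrals exist because `w ∈ L_{2s}` and, away from `x₀`,
`1 + |y| ^ (n + 2s) ≤ C_ε |x₀ - y| ^ (n + 2s)`.
-/

open MeasureTheory Filter Metric Set

noncomputable section

section FarField

variable {E : Type*} [NormedAddCommGroup E]

lemma setOf_le_dist_eq_compl_ball (x : E) (ε : ℝ) :
    {y : E | ε ≤ dist x y} = (ball x ε)ᶜ := by
  ext y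
  simp [dist_comm]

lemma one_add_norm_le_mul_dist {x y : E} {ε : ℝ} (hε : 0 < ε) (hy : ε ≤ dist x y) :
    1 + ‖y‖ ≤ ((1 + ‖x‖) / ε + 1) * dist x y := by
  have hdist : 1 + ‖x‖ ≤ (1 + ‖x‖) / ε * dist x y := by
    rw [div_mul_eq_mul_div, le_div_iff₀ hε]
    exact mul_le_mul_of_nonneg_left hy (by positivity)
  have hnorm : ‖y‖ ≤ ‖x‖ + dist x y := by
    simpa [dist_eq_norm', add_comm] using norm_le_norm_add_norm_sub' y x
  nlinarith

lemma one_add_norm_rpow_le_two_mul_one_add_norm_rpow (y : E) {p : ℝ} (hp : 0 ≤ p) :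
    1 + ‖y‖ ^ p ≤ 2 * (1 + ‖y‖) ^ p := by
  have h₁ : 1 ≤ (1 + ‖y‖) ^ p := Real.one_le_rpow (by linarith [norm_nonneg y]) hp
  have h₂ : ‖y‖ ^ p ≤ (1 + ‖y‖) ^ p := by gcongr; linarith
  linarith

variable [MeasurableSpace E] [BorelSpace E] {μ : Measure E}

lemma integrableOn_div_dist_rpow {f : E → ℝ} {p : ℝ} (hp : 0 ≤ p)
    (hf : AEStronglyMeasurable f μ) (hf_int : Integrable (fun y => |f y| / (1 + ‖y‖ ^ p)) μ)
    (x : E) {ε : ℝ} (hε : 0 < ε) :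
    IntegrableOn (fun y => f y / dist x y ^ p) {y | ε ≤ dist x y} μ := by
  set K := (1 + ‖x‖) / ε + 1
  rw [setOf_le_dist_eq_compl_ball]
  refine (hf_int.const_mul (2 * K ^ p)).integrableOn.mono' ?_ ?_
  · exact (hf.div₀ ((continuous_const.dist continuous_id).rpow_const
      fun _ => Or.inr hp).aestronglyMeasurable).restrict
  filter_upwards [ae_restrict_mem measurableSet_ball.compl] with y hy
  have hy' : ε ≤ dist x y := by simpa [dist_comm] using hy
  have hd : 0 < dist x y ^ p := Real.rpow_pos_of_pos (hε.trans_le hy') p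
  have hweight : 1 + ‖y‖ ^ p ≤ 2 * K ^ p * dist x y ^ p := calc
    1 + ‖y‖ ^ p ≤ 2 * (1 + ‖y‖) ^ p := one_add_norm_rpow_le_two_mul_one_add_norm_rpow y hp
    _ ≤ 2 * (K * dist x y) ^ p := by gcongr; exact one_add_norm_le_mul_dist hε hy'
    _ = 2 * K ^ p * dist x y ^ p := by
      rw [Real.mul_rpow (by positivity) dist_nonneg, mul_assoc]
  rw [norm_div, Real.norm_eq_abs, Real.norm_eq_abs, abs_of_pos hd, mul_div_assoc',
    div_le_div_iff₀ hd (by positivity)]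
  calc |f y| * (1 + ‖y‖ ^ p) ≤ |f y| * (2 * K ^ p * dist x y ^ p) := by gcongr
    _ = 2 * K ^ p * |f y| * dist x y ^ p := by ring

variable [NormedSpace ℝ E] [FiniteDimensional ℝ E] [μ.IsAddHaarMeasure]

lemma integrableOn_one_div_dist_rpow {p : ℝ} (hp : (Module.finrank ℝ E : ℝ) < p) (x : E)
    {ε : ℝ} (hε : 0 < ε) :
    IntegrableOn (fun y => 1 / dist x y ^ p) {y | ε ≤ dist x y} μ := by
  have hp₀ : 0 ≤ p := (Nat.cast_nonneg _).trans hp.le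
  set K := (1 + ‖x‖) / ε + 1
  rw [setOf_le_dist_eq_compl_ball]
  refine ((integrable_one_add_norm hp).const_mul (K ^ p)).integrableOn.mono' ?_ ?_
  · exact (aestronglyMeasurable_const.div₀ ((continuous_const.dist continuous_id).rpow_const
      fun _ => Or.inr hp₀).aestronglyMeasurable).restrict
  filter_upwards [ae_restrict_mem measurableSet_ball.compl] with y hy
  have hy' : ε ≤ dist x y := by simpa [dist_comm] using hy
  have hd : 0 < dist x y := hε.trans_le hy'
  rw [Real.norm_of_nonneg (by positivity), Real.rpow_neg (by positivity), ← div_eq_mul_inv,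
    div_le_div_iff₀ (by positivity) (by positivity), one_mul,
    ← Real.mul_rpow (by positivity) hd.le]
  exact Real.rpow_le_rpow (by positivity) (one_add_norm_le_mul_dist hε hy') hp₀

end FarField

lemma setIntegral_sub_div_le_mul_setIntegral_one_div {α : Type*} [MeasurableSpace α]
    {μ : Measure α} {S T : Set α} {w k : α → ℝ} {m : ℝ}
    (hT : MeasurableSet T) (hTS : T ⊆ S)
    (hk : ∀ y, 0 ≤ k y) (hmin : ∀ y, m ≤ w y) (hw : ∀ y ∈ T, 0 ≤ w y)
    (hint : IntegrableOn (fun y => (m - w y) / k y) S μ)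
    (hk_int : IntegrableOn (fun y => 1 / k y) T μ) :
    ∫ y in S, (m - w y) / k y ∂μ ≤ m * ∫ y in T, 1 / k y ∂μ := by
  have hnonpos : ∀ y, (m - w y) / k y ≤ 0 := fun y =>
    div_nonpos_of_nonpos_of_nonneg (sub_nonpos.2 (hmin y)) (hk y)
  calc ∫ y in S, (m - w y) / k y ∂μ ≤ ∫ y in T, (m - w y) / k y ∂μ := by
        have := setIntegral_mono_set hint.neg
          (ae_of_all _ fun y => neg_nonneg.2 (hnonpos y)) hTS.eventuallyLE
        simpa only [Pi.neg_apply, integral_neg, neg_le_neg_iff] using this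
    _ ≤ ∫ y in T, m * (1 / k y) ∂μ := by
        refine setIntegral_mono_on (hint.mono_set hTS) (hk_int.const_mul m) hT fun y hy => ?_
        rw [mul_one_div]
        exact div_le_div_of_nonneg_right (by linarith [hw y hy]) (hk y)
    _ = m * ∫ y in T, 1 / k y ∂μ := integral_const_mul m _

theorem fracLap_estimate_at_negative_min_general
    (n : ℕ) (s : ℝ) (hs : s ∈ Set.Ioo (0 : ℝ) 1) (Cns : ℝ) (hCns : 0 < Cns)
    (D : Set (Pt n)) (hDopen : IsOpen D)
    (w : Pt n → ℝ) (hwL : MemL2s n s w)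
    (hext : ∀ x : Pt n, x ∉ D → 0 ≤ w x)
    (x0 : Pt n) (hx0 : x0 ∈ D)
    (hmin : ∀ y : Pt n, w x0 ≤ w y)
    (L : ℝ) (hL : HasFracLap n s Cns w x0 L) :
    L ≤ Cns * w x0 * ∫ y in Dᶜ, 1 / dist x0 y ^ ((n : ℝ) + 2 * s) := by
  obtain ⟨r, hr, hball⟩ := Metric.isOpen_iff.mp hDopen x0 hx0
  have hfar : Dᶜ ⊆ {y | r ≤ dist x0 y} :=
    setOf_le_dist_eq_compl_ball x0 r ▸ compl_subset_compl.mpr hball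
  have hp : (Module.finrank ℝ (Pt n) : ℝ) < n + 2 * s := by
    rw [finrank_euclideanSpace_fin]; linarith [hs.1]
  have hkernel {ε : ℝ} (hε : 0 < ε) := integrableOn_one_div_dist_rpow (μ := volume) hp x0 hε
  refine le_of_tendsto hL ?_
  filter_upwards [Ioo_mem_nhdsGT hr] with ε ⟨hε, hεr⟩
  have hint : IntegrableOn (fun y => (w x0 - w y) / dist x0 y ^ ((n : ℝ) + 2 * s))
      {y | ε ≤ dist x0 y} := by
    have hw := integrableOn_div_dist_rpow (by linarith [hs.1])
      hwL.1.aestronglyMeasurable hwL.2 x0 hε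
    simpa only [IntegrableOn, mul_one_div, sub_div, Pi.sub_def] using
      ((hkernel hε).const_mul (w x0)).sub hw
  have hDε : Dᶜ ⊆ {y | ε ≤ dist x0 y} := hfar.trans fun y hy => hεr.le.trans hy
  have hbound := setIntegral_sub_div_le_mul_setIntegral_one_div
    hDopen.isClosed_compl.measurableSet hDε (fun y => by positivity) hmin hext hint
    ((hkernel hr).mono_set hfar)
  rw [mul_assoc]
  exact mul_le_mul_of_nonneg_left hbound hCns.le

/-- Key estimate on the fractional Laplacian at a negative global minimum attained inside `D`,
for a function that is nonnegative outside `D`. -/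
theorem fracLap_estimate_at_negative_min
    (n : ℕ) (hn : 0 < n) (s : ℝ) (hs : s ∈ Set.Ioo (0 : ℝ) 1) (Cns : ℝ) (hCns : 0 < Cns)
    (D : Set (Pt n)) (hDopen : IsOpen D)
    (w : Pt n → ℝ) (hwL : MemL2s n s w)
    (hext : ∀ x : Pt n, x ∉ D → 0 ≤ w x)
    (x0 : Pt n) (hx0 : x0 ∈ D) (hneg : w x0 < 0)
    (hmin : ∀ y : Pt n, w x0 ≤ w y)
    (L : ℝ) (hL : HasFracLap n s Cns w x0 L) :
    L ≤ Cns * w x0 * ∫ y in Dᶜ, 1 / dist x0 y ^ ((n : ℝ) + 2 * s) :=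
  fracLap_estimate_at_negative_min_general n s hs Cns hCns D hDopen w hwL hext x0 hx0 hmin L hL
end
end
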